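/- arXiv:1510.06449 — 10 statements merged into one kernel-verified Lean document; each statement's English description precedes it below -/
import Mathlib

section
/- Let α > 0 and β > 1, and let Ω(α,β) := ⋃_{j=1}^∞ (j^α, j^α + j^{-β}) ⊆ ℝ. Then |Ω(α,β)| < ∞, and with D := (1-(α+β))/α one has V_{Ω(α,β)}(t)/t^{1+D} → 1/(β-1) as t → +∞. In particular, Ω(α,β) is Minkowski measurable at infinity with dim_B(∞,Ω(α,β)) = D and M^D(∞,Ω(α,β)) = 1/(β-1). -/
open MeasureTheory Filter Set
open scoped Topology ENNReal

/-!
The `j`-th interval of `Ω(α, β)` has length `j ^ (-β)`, and from some index on the intervals are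
pairwise disjoint, since consecutive left endpoints are about `α j ^ (α - 1) ≫ j ^ (-β)` apart.
So the part of `Ω` beyond `t` has measure squeezed between tails `∑_{j > n} j ^ (-β)` with
`n ≈ t ^ (1 / α)`. Comparing with the telescoping series of
`(j ^ (1 - β) - (j + 1) ^ (1 - β)) / (β - 1)` gives `∑_{j > n} j ^ (-β) ∼ n ^ (1 - β) / (β - 1) ∼ t ^ (1 + D) / (β - 1)`.
-/

lemma hasSum_sub_succ_of_antitone {f : ℕ → ℝ} (hf : Antitone f) (h : Tendsto f atTop (𝓝 0)) :
    HasSum (fun n => f n - f (n + 1)) (f 0) := by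
  rw [hasSum_iff_tendsto_nat_of_nonneg fun n => sub_nonneg.2 (hf n.le_succ)]
  simpa only [Finset.sum_range_sub', sub_zero] using h.const_sub (f 0)

lemma exists_rpow_add_one_sub_rpow (p : ℝ) {x : ℝ} (hx : 0 < x) :
    ∃ c ∈ Ioo x (x + 1), (x + 1) ^ p - x ^ p = p * c ^ (p - 1) := by
  have hderiv : ∀ y ∈ Ioo x (x + 1), HasDerivAt (fun z : ℝ => z ^ p) (p * y ^ (p - 1)) y :=
    fun y hy => Real.hasDerivAt_rpow_const (Or.inl (hx.trans hy.1).ne')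
  have hcont : ContinuousOn (fun z : ℝ => z ^ p) (Icc x (x + 1)) := fun y hy =>
    (Real.continuousAt_rpow_const _ _ (Or.inl (hx.trans_le hy.1).ne')).continuousWithinAt
  obtain ⟨c, hc, h⟩ := exists_hasDerivAt_eq_slope _ _ (lt_add_one x) hcont hderiv
  exact ⟨c, hc, by rw [h, add_sub_cancel_left, div_one]⟩

lemma rpow_one_sub_sub_rpow_one_sub_mem_Icc {β x : ℝ} (hβ : 1 < β) (hx : 0 < x) :
    x ^ (1 - β) - (x + 1) ^ (1 - β) ∈ Icc ((β - 1) * (x + 1) ^ (-β)) ((β - 1) * x ^ (-β)) := by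
  obtain ⟨c, hc, h⟩ := exists_rpow_add_one_sub_rpow (1 - β) hx
  rw [show x ^ (1 - β) - (x + 1) ^ (1 - β) = (β - 1) * c ^ (-β) by
    rw [show -β = 1 - β - 1 by ring]; linarith]
  have hβ' : 0 ≤ β - 1 := by linarith
  exact ⟨mul_le_mul_of_nonneg_left
      (Real.rpow_le_rpow_of_nonpos (hx.trans hc.1) hc.2.le (by linarith)) hβ',
    mul_le_mul_of_nonneg_left (Real.rpow_le_rpow_of_nonpos hx hc.1.le (by linarith)) hβ'⟩

lemma hasSum_rpow_one_sub_sub_rpow_one_sub {β a : ℝ} (hβ : 1 < β) (ha : 0 < a) :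
    HasSum (fun k : ℕ => (a + k) ^ (1 - β) - (a + (k + 1 : ℕ)) ^ (1 - β)) (a ^ (1 - β)) := by
  have hanti : Antitone fun k : ℕ => (a + k) ^ (1 - β) := fun k k' hk =>
    Real.rpow_le_rpow_of_nonpos (by positivity) (by gcongr) (by linarith)
  have hlim : Tendsto (fun k : ℕ => (a + k) ^ (1 - β)) atTop (𝓝 0) := by
    have := (tendsto_rpow_neg_atTop (by linarith : 0 < β - 1)).comp
      (tendsto_atTop_add_const_left _ a tendsto_natCast_atTop_atTop)
    simpa [neg_sub, Function.comp_def] using this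
  simpa using hasSum_sub_succ_of_antitone hanti hlim

lemma summable_add_one_rpow_neg {β : ℝ} (hβ : 1 < β) :
    Summable fun j : ℕ => ((j : ℝ) + 1) ^ (-β) := by
  simpa using (summable_nat_add_iff 1).2 (Real.summable_nat_rpow.2 (neg_lt_neg hβ))

/-- `∑_{j > n} j ^ (-β)`. -/
noncomputable def tailSum (β : ℝ) (n : ℕ) : ℝ := ∑' k : ℕ, (((n + k : ℕ) : ℝ) + 1) ^ (-β)

section tailSum

variable {β : ℝ}

lemma summable_tailSum (hβ : 1 < β) (n : ℕ) :
    Summable fun k : ℕ => (((n + k : ℕ) : ℝ) + 1) ^ (-β) :=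
  (summable_add_one_rpow_neg hβ).comp_injective (add_right_injective n)

lemma tailSum_nonneg (n : ℕ) : 0 ≤ tailSum β n :=
  tsum_nonneg fun _ => by positivity

lemma tailSum_le (hβ : 1 < β) {n : ℕ} (hn : 1 ≤ n) :
    tailSum β n ≤ (n : ℝ) ^ (1 - β) / (β - 1) := by
  have hβ' : 0 < β - 1 := by linarith
  refine hasSum_le (fun k => ?_) (summable_tailSum hβ n).hasSum
    ((hasSum_rpow_one_sub_sub_rpow_one_sub hβ (by positivity : (0 : ℝ) < n)).div_const (β - 1))
  have hx : (0 : ℝ) < n + k := by positivity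
  rw [le_div_iff₀ hβ', mul_comm]
  convert (rpow_one_sub_sub_rpow_one_sub_mem_Icc hβ hx).1 using 3 <;> push_cast <;> ring

lemma le_tailSum (hβ : 1 < β) (n : ℕ) :
    ((n : ℝ) + 1) ^ (1 - β) / (β - 1) ≤ tailSum β n := by
  have hβ' : 0 < β - 1 := by linarith
  refine hasSum_le (fun k => ?_)
    ((hasSum_rpow_one_sub_sub_rpow_one_sub hβ (by positivity : (0 : ℝ) < n + 1)).div_const (β - 1))
    (summable_tailSum hβ n).hasSum
  have hx : (0 : ℝ) < n + k + 1 := by positivity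
  rw [div_le_iff₀ hβ', mul_comm]
  convert (rpow_one_sub_sub_rpow_one_sub_mem_Icc hβ hx).2 using 3 <;> push_cast <;> ring

lemma tendsto_tailSum_mul_rpow (hβ : 1 < β) :
    Tendsto (fun n : ℕ => tailSum β n * (n : ℝ) ^ (β - 1)) atTop (𝓝 (1 / (β - 1))) := by
  have hβ' : 0 < β - 1 := by linarith
  have hlower : Tendsto (fun n : ℕ => ((n : ℝ) / (n + 1)) ^ (β - 1) / (β - 1)) atTop
      (𝓝 (1 / (β - 1))) := by
    simpa using ((tendsto_natCast_div_add_atTop (1 : ℝ)).rpow_const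
      (Or.inr hβ'.le)).div_const (β - 1)
  refine tendsto_of_tendsto_of_tendsto_of_le_of_le' hlower tendsto_const_nhds ?_ ?_
  · filter_upwards [eventually_ge_atTop 1] with n hn
    have hn0 : (0 : ℝ) < n := by exact_mod_cast hn
    calc ((n : ℝ) / (n + 1)) ^ (β - 1) / (β - 1)
        = ((n : ℝ) + 1) ^ (1 - β) / (β - 1) * (n : ℝ) ^ (β - 1) := by
          rw [Real.div_rpow hn0.le (by positivity), show 1 - β = -(β - 1) by ring,
            Real.rpow_neg (by positivity)]
          ring
      _ ≤ tailSum β n * (n : ℝ) ^ (β - 1) := by gcongr; exact le_tailSum hβ n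
  · filter_upwards [eventually_ge_atTop 1] with n hn
    have hn0 : (0 : ℝ) < n := by exact_mod_cast hn
    calc tailSum β n * (n : ℝ) ^ (β - 1)
        ≤ (n : ℝ) ^ (1 - β) / (β - 1) * (n : ℝ) ^ (β - 1) := by gcongr; exact tailSum_le hβ hn
      _ = 1 / (β - 1) := by
          rw [div_mul_eq_mul_div, ← Real.rpow_add hn0, sub_add_sub_cancel', sub_self,
            Real.rpow_zero]

end tailSum

lemma tendsto_natFloor_rpow_sub_div_rpow {p : ℝ} (hp : 0 < p) (c : ℝ) :
    Tendsto (fun t : ℝ => (⌊(t - c) ^ p⌋₊ : ℝ) / t ^ p) atTop (𝓝 1) := by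
  have hu : Tendsto (fun t : ℝ => (t - c) ^ p) atTop atTop :=
    (tendsto_rpow_atTop hp).comp (tendsto_atTop_add_const_right _ (-c) tendsto_id)
  have hratio : Tendsto (fun t : ℝ => ((t - c) / t) ^ p) atTop (𝓝 1) := by
    have h : Tendsto (fun t : ℝ => 1 - c / t) atTop (𝓝 1) := by
      simpa using tendsto_const_nhds.sub ((tendsto_const_nhds (x := c)).div_atTop tendsto_id)
    have h' : Tendsto (fun t : ℝ => (t - c) / t) atTop (𝓝 1) :=
      h.congr' (by filter_upwards [eventually_ne_atTop 0] with t ht; field_simp)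
    simpa using h'.rpow_const (Or.inr hp.le)
  refine ((tendsto_nat_floor_div_atTop.comp hu).mul hratio).congr' ?_ |>.trans (by rw [one_mul])
  filter_upwards [eventually_gt_atTop (max c 0)] with t ht
  obtain ⟨htc, ht0⟩ := max_lt_iff.1 ht
  have hpos : 0 < (t - c) ^ p := Real.rpow_pos_of_pos (sub_pos.2 htc) p
  simp only [Function.comp_apply]
  rw [Real.div_rpow (sub_pos.2 htc).le ht0.le]
  field_simp

lemma rpow_le_natFloor_rpow_inv_add_one_rpow {α t : ℝ} (hα : 0 < α) (ht : 0 ≤ t) :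
    t ≤ ((⌊t ^ α⁻¹⌋₊ : ℝ) + 1) ^ α :=
  calc t = (t ^ α⁻¹) ^ α := (Real.rpow_inv_rpow ht hα.ne').symm
    _ ≤ ((⌊t ^ α⁻¹⌋₊ : ℝ) + 1) ^ α := by gcongr; exact (Nat.lt_floor_add_one _).le

lemma natFloor_rpow_inv_rpow_le {α t : ℝ} (hα : 0 < α) (ht : 0 ≤ t) :
    (⌊t ^ α⁻¹⌋₊ : ℝ) ^ α ≤ t :=
  calc (⌊t ^ α⁻¹⌋₊ : ℝ) ^ α ≤ (t ^ α⁻¹) ^ α := by gcongr; exact Nat.floor_le (by positivity)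
    _ = t := Real.rpow_inv_rpow ht hα.ne'

lemma eventually_rpow_add_rpow_neg_le_rpow_add_one {α β : ℝ} (hα : 0 < α) (hαβ : 1 < α + β) :
    ∀ᶠ x : ℝ in atTop, x ^ α + x ^ (-β) ≤ (x + 1) ^ α := by
  filter_upwards [eventually_ge_atTop 1,
    (tendsto_rpow_atTop (by linarith : 0 < α + β - 1)).eventually_ge_atTop (2 / α)] with x hx1 hx
  have hx0 : 0 < x := by linarith
  obtain ⟨c, hc, hdiff⟩ := exists_rpow_add_one_sub_rpow α hx0
  have hc0 : 0 < c := hx0.trans hc.1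
  have hsplit : x ^ α = x ^ (α + β - 1) * x * x ^ (-β) := by
    rw [← Real.rpow_add_one hx0.ne', ← Real.rpow_add hx0]
    ring_nf
  -- writing `c ^ (α - 1) = c ^ α / c` gives a lower bound whatever the sign of `α - 1`
  have hmvt : x ^ α / (x + 1) ≤ c ^ (α - 1) := by
    rw [Real.rpow_sub_one hc0.ne']
    gcongr
    · exact hc.1.le
    · exact hc.2.le
  have hxβ : 0 ≤ x ^ (-β) := by positivity
  have hsmall : x ^ (-β) ≤ α * (x ^ α / (x + 1)) := by
    rw [mul_div_assoc', le_div_iff₀ (by linarith), hsplit]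
    have h2 : 2 ≤ α * x ^ (α + β - 1) := by rwa [div_le_iff₀' hα] at hx
    nlinarith [mul_le_mul_of_nonneg_right h2 (mul_nonneg hx0.le hxβ),
      mul_nonneg (sub_nonneg.2 hx1) hxβ]
  calc x ^ α + x ^ (-β) ≤ x ^ α + α * c ^ (α - 1) := by gcongr; exact hsmall.trans (by gcongr)
    _ = (x + 1) ^ α := by rw [← hdiff]; ring

def window (α β : ℝ) (j : ℕ) : Set ℝ :=
  Ioo (((j : ℝ) + 1) ^ α) (((j : ℝ) + 1) ^ α + ((j : ℝ) + 1) ^ (-β))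

section window

variable {α β : ℝ}

lemma volume_window (j : ℕ) : volume (window α β j) = ENNReal.ofReal (((j : ℝ) + 1) ^ (-β)) := by
  simp [window, Real.volume_Ioo]

lemma tsum_volume_window_add (hβ : 1 < β) (n : ℕ) :
    ∑' k, volume (window α β (n + k)) = ENNReal.ofReal (tailSum β n) := by
  simp only [volume_window, tailSum]
  exact (ENNReal.ofReal_tsum_of_nonneg (fun _ => by positivity) (summable_tailSum hβ n)).symm

lemma volume_iUnion_window_lt_top (hβ : 1 < β) : volume (⋃ j, window α β j) < ⊤ :=
  calc volume (⋃ j, window α β j) ≤ ∑' j, volume (window α β (0 + j)) := by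
        simpa only [zero_add] using measure_iUnion_le _
    _ = ENNReal.ofReal (tailSum β 0) := tsum_volume_window_add hβ 0
    _ < ⊤ := ENNReal.ofReal_lt_top

open Function in
lemma pairwise_disjoint_window_add (hα : 0 < α) {n : ℕ}
    (hgap : ∀ j ≥ n, ((j : ℝ) + 1) ^ α + ((j : ℝ) + 1) ^ (-β) ≤ ((j : ℝ) + 1 + 1) ^ α) :
    Pairwise (Disjoint on fun k => window α β (n + k)) := by
  refine (pairwise_disjoint_on _).2 fun i i' hii' => disjoint_left.2 fun x hx hx' => ?_
  have hend := hgap (n + i) (Nat.le_add_right n i)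
  have hmono : (((n + i : ℕ) : ℝ) + 1 + 1) ^ α ≤ (((n + i' : ℕ) : ℝ) + 1) ^ α := by
    gcongr
    norm_cast
    omega
  linarith [hx.2, hx'.1]

lemma toReal_volume_le_tailSum (hα : 0 < α) (hβ : 1 < β) {t : ℝ} {n : ℕ}
    (hn : (n : ℝ) ^ α ≤ t - 1) :
    (volume {x ∈ ⋃ j, window α β j | t < |x|}).toReal ≤ tailSum β n := by
  have hsub : {x ∈ ⋃ j, window α β j | t < |x|} ⊆ ⋃ k, window α β (n + k) := by
    rintro x ⟨hx, hxt⟩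
    obtain ⟨j, hj⟩ := mem_iUnion.1 hx
    have hnj : n ≤ j := by
      by_contra! hjn
      have hjn' : ((j : ℝ) + 1) ^ α ≤ (n : ℝ) ^ α := by
        gcongr; exact_mod_cast Nat.succ_le_of_lt hjn
      have hlen : ((j : ℝ) + 1) ^ (-β) ≤ 1 :=
        Real.rpow_le_one_of_one_le_of_nonpos (by linarith [j.cast_nonneg (α := ℝ)]) (by linarith)
      have hx0 : 0 < x := lt_trans (by positivity) hj.1
      rw [abs_of_pos hx0] at hxt
      linarith [hj.2]
    exact mem_iUnion.2 ⟨j - n, by rwa [Nat.add_sub_cancel' hnj]⟩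
  refine ENNReal.toReal_le_of_le_ofReal (tailSum_nonneg n) ?_
  calc volume {x ∈ ⋃ j, window α β j | t < |x|} ≤ volume (⋃ k, window α β (n + k)) :=
        measure_mono hsub
    _ ≤ ∑' k, volume (window α β (n + k)) := measure_iUnion_le _
    _ = ENNReal.ofReal (tailSum β n) := tsum_volume_window_add hβ n

lemma tailSum_le_toReal_volume (hα : 0 < α) (hβ : 1 < β) {t : ℝ} {n : ℕ}
    (hgap : ∀ j ≥ n, ((j : ℝ) + 1) ^ α + ((j : ℝ) + 1) ^ (-β) ≤ ((j : ℝ) + 1 + 1) ^ α)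
    (ht : t ≤ ((n : ℝ) + 1) ^ α) :
    tailSum β n ≤ (volume {x ∈ ⋃ j, window α β j | t < |x|}).toReal := by
  have hsub : ⋃ k, window α β (n + k) ⊆ {x ∈ ⋃ j, window α β j | t < |x|} := by
    intro x hx
    obtain ⟨k, hk⟩ := mem_iUnion.1 hx
    refine ⟨mem_iUnion.2 ⟨n + k, hk⟩, ?_⟩
    have hnk : ((n : ℝ) + 1) ^ α ≤ (((n + k : ℕ) : ℝ) + 1) ^ α := by gcongr; omega
    linarith [hk.1, le_abs_self x]
  have hfin : volume {x ∈ ⋃ j, window α β j | t < |x|} ≠ ⊤ :=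
    ((measure_mono (sep_subset _ _)).trans_lt (volume_iUnion_window_lt_top hβ)).ne
  rw [← ENNReal.ofReal_le_iff_le_toReal hfin, ← tsum_volume_window_add (α := α) hβ,
    ← measure_iUnion (pairwise_disjoint_window_add hα hgap) fun _ => measurableSet_Ioo]
  exact measure_mono hsub

end window

lemma tendsto_tailSum_natFloor_div {α β : ℝ} (hα : 0 < α) (hβ : 1 < β) (c : ℝ) :
    Tendsto (fun t : ℝ => tailSum β ⌊(t - c) ^ α⁻¹⌋₊ / t ^ ((1 : ℝ) + (1 - (α + β)) / α))
      atTop (𝓝 (1 / (β - 1))) := by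
  set n : ℝ → ℕ := fun t => ⌊(t - c) ^ α⁻¹⌋₊
  have hn : Tendsto n atTop atTop := tendsto_nat_floor_atTop.comp <|
    (tendsto_rpow_atTop (inv_pos.2 hα)).comp (tendsto_atTop_add_const_right _ (-c) tendsto_id)
  have hratio : Tendsto (fun t => ((n t : ℝ) / t ^ α⁻¹) ^ (1 - β)) atTop (𝓝 1) := by
    simpa using (tendsto_natFloor_rpow_sub_div_rpow (inv_pos.2 hα) c).rpow_const
      (Or.inl one_ne_zero)
  refine (((tendsto_tailSum_mul_rpow hβ).comp hn).mul hratio).congr' ?_ |>.trans (by rw [mul_one])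
  filter_upwards [eventually_gt_atTop 0, hn.eventually_ge_atTop 1] with t ht hnt
  have hn0 : (0 : ℝ) < n t := by exact_mod_cast hnt
  have hexp : (1 : ℝ) + (1 - (α + β)) / α = α⁻¹ * (1 - β) := by field_simp; ring
  simp only [Function.comp_apply]
  rw [Real.div_rpow hn0.le (by positivity), ← Real.rpow_mul ht.le, hexp, mul_assoc,
    mul_div_assoc', ← Real.rpow_add hn0, sub_add_sub_cancel', sub_self, Real.rpow_zero, mul_one_div]

/-- For `α > 0`, `β > 1` and `Ω(α,β) = ⋃_{j≥1} (j^α, j^α + j^{-β}) ⊆ ℝ`,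
one has `|Ω(α,β)| < ∞` and, with `D = (1-(α+β))/α`,
`V_{Ω(α,β)}(t)/t^{1+D} → 1/(β-1)` as `t → +∞`; i.e. `Ω(α,β)` is Minkowski measurable
at infinity with `dim_B(∞,Ω(α,β)) = D` and `M^D(∞,Ω(α,β)) = 1/(β-1)`. -/
theorem stmt_2 (α β : ℝ) (hα : 0 < α) (hβ : 1 < β)
    (Ω : Set ℝ)
    (hΩ : Ω = ⋃ j : ℕ,
      Set.Ioo (((j : ℝ) + 1) ^ α) (((j : ℝ) + 1) ^ α + ((j : ℝ) + 1) ^ (-β))) :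
    volume Ω < ⊤ ∧
    Tendsto (fun t : ℝ =>
        (volume {x ∈ Ω | t < |x|}).toReal / t ^ ((1 : ℝ) + (1 - (α + β)) / α))
      atTop (𝓝 (1 / (β - 1))) := by
  change Ω = ⋃ j, window α β j at hΩ
  subst hΩ
  refine ⟨volume_iUnion_window_lt_top hβ, ?_⟩
  obtain ⟨J, hgap⟩ := ((tendsto_atTop_add_const_right _ 1 tendsto_natCast_atTop_atTop).eventually
    (eventually_rpow_add_rpow_neg_le_rpow_add_one hα (by linarith))).exists_forall_of_atTop
  have hfloor := tendsto_nat_floor_atTop.comp (tendsto_rpow_atTop (inv_pos.2 hα))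
  refine tendsto_of_tendsto_of_tendsto_of_le_of_le'
    (by simpa using tendsto_tailSum_natFloor_div hα hβ 0) (tendsto_tailSum_natFloor_div hα hβ 1)
    ?_ ?_
  · filter_upwards [eventually_gt_atTop 0, hfloor.eventually_ge_atTop J] with t ht hJ
    gcongr
    exact tailSum_le_toReal_volume hα hβ (fun j hj => hgap j (hJ.trans hj))
      (rpow_le_natFloor_rpow_inv_add_one_rpow hα ht.le)
  · filter_upwards [eventually_ge_atTop 1] with t ht
    gcongr
    exact toReal_volume_le_tailSum hα hβ (natFloor_rpow_inv_rpow_le hα (by linarith))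
end

section
/- Let Ω ⊆ ℝ² be Lebesgue measurable with |Ω| < ∞ and suppose Ω is contained in a horizontal strip {(x,y) : |y| ≤ d} for some d > 0. Then for every real r, limsup_{t→+∞} |{(x,y) ∈ Ω : max(|x|,|y|) > t}|/t^{2+r} = limsup_{t→+∞} |{p ∈ Ω : |p| > t}|/t^{2+r}, and the same equality holds with liminf in place of limsup; i.e., the upper and lower r-dimensional Minkowski contents of Ω at infinity computed with the sup-norm |·|_∞ on ℝ² coincide with those computed with the Euclidean norm. -/
/-!
On the strip `|y| ≤ d` we have `|p|_∞ ≤ ‖p‖ ≤ |p|_∞ + d`, so the Euclidean tail at `t` is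
squeezed between the sup-norm tails at `t` and at `t - d`, and `t - d ≥ t / c` for any
`c > 1` once `t` is large. Rescaling `t ↦ t / c` multiplies the weight `t ^ (2 + r)` by
`c ^ (2 + r)`, which tends to `1` as `c → 1⁺`.
-/

open MeasureTheory Filter
open scoped Topology ENNReal

lemma div_ofReal_rpow_eq_ofReal_rpow_neg_mul (x : ℝ≥0∞) {t c : ℝ} (ht : 0 < t) (hc : 0 < c)
    (s : ℝ) :
    x / ENNReal.ofReal (t ^ s) =
      ENNReal.ofReal (c ^ (-s)) * (x / ENNReal.ofReal ((t / c) ^ s)) := by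
  have hts : 0 < (t / c) ^ s := Real.rpow_pos_of_pos (div_pos ht hc) s
  rw [ENNReal.div_eq_inv_mul, ENNReal.div_eq_inv_mul, ← mul_assoc,
    ← ENNReal.ofReal_inv_of_pos (Real.rpow_pos_of_pos ht s), ← ENNReal.ofReal_inv_of_pos hts,
    ← ENNReal.ofReal_mul (Real.rpow_nonneg hc.le _), Real.div_rpow ht.le hc.le,
    Real.rpow_neg hc.le]
  congr 2
  have := (Real.rpow_pos_of_pos hc s).ne'
  field_simp

lemma tendsto_ofReal_rpow_nhdsGT_one (s : ℝ) :
    Tendsto (fun c : ℝ => ENNReal.ofReal (c ^ s)) (𝓝[>] 1) (𝓝 1) := by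
  have hcont : ContinuousAt (fun c : ℝ => ENNReal.ofReal (c ^ s)) 1 :=
    ENNReal.continuous_ofReal.continuousAt.comp
      (Real.continuousAt_rpow_const 1 s (Or.inl one_ne_zero))
  simpa using hcont.tendsto.mono_left nhdsWithin_le_nhds

lemma le_of_forall_one_lt_le_ofReal_rpow_mul {M L : ℝ≥0∞} (s : ℝ)
    (h : ∀ c : ℝ, 1 < c → M ≤ ENNReal.ofReal (c ^ s) * L) : M ≤ L := by
  have hlim : Tendsto (fun c : ℝ => ENNReal.ofReal (c ^ s) * L) (𝓝[>] 1) (𝓝 L) := by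
    simpa using ENNReal.Tendsto.mul_const (tendsto_ofReal_rpow_nhdsGT_one s) (Or.inl one_ne_zero)
  exact ge_of_tendsto hlim (eventually_nhdsWithin_of_forall h)

section Rescaling

variable {F G : ℝ → ℝ≥0∞} {s : ℝ}

lemma eventually_div_rpow_le_of_le_comp_div {c : ℝ} (hc : 0 < c)
    (h : ∀ᶠ t in atTop, G t ≤ F (t / c)) :
    ∀ᶠ t in atTop, G t / ENNReal.ofReal (t ^ s) ≤
      ENNReal.ofReal (c ^ (-s)) * (F (t / c) / ENNReal.ofReal ((t / c) ^ s)) := by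
  filter_upwards [h, eventually_gt_atTop 0] with t hGF ht
  rw [div_ofReal_rpow_eq_ofReal_rpow_neg_mul _ ht hc]
  gcongr

lemma limsup_comp_div_const_atTop {α : Type*} [ConditionallyCompleteLattice α] (u : ℝ → α)
    {c : ℝ} (hc : 0 < c) : limsup (fun t => u (t / c)) atTop = limsup u atTop :=
  (limsup_comp u (· / c) atTop).trans (congrArg _ (OrderIso.divRight₀ c hc).map_atTop)

lemma liminf_comp_div_const_atTop {α : Type*} [ConditionallyCompleteLattice α] (u : ℝ → α)
    {c : ℝ} (hc : 0 < c) : liminf (fun t => u (t / c)) atTop = liminf u atTop :=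
  (liminf_comp u (· / c) atTop).trans (congrArg _ (OrderIso.divRight₀ c hc).map_atTop)

lemma limsup_div_rpow_le_of_le_comp_div
    (h : ∀ c : ℝ, 1 < c → ∀ᶠ t in atTop, G t ≤ F (t / c)) :
    limsup (fun t => G t / ENNReal.ofReal (t ^ s)) atTop ≤
      limsup (fun t => F t / ENNReal.ofReal (t ^ s)) atTop := by
  refine le_of_forall_one_lt_le_ofReal_rpow_mul (-s) fun c hc => ?_
  have hc0 : 0 < c := one_pos.trans hc
  calc limsup (fun t => G t / ENNReal.ofReal (t ^ s)) atTop
      ≤ limsup (fun t => ENNReal.ofReal (c ^ (-s)) *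
          (F (t / c) / ENNReal.ofReal ((t / c) ^ s))) atTop :=
        limsup_le_limsup (eventually_div_rpow_le_of_le_comp_div hc0 (h c hc))
    _ = ENNReal.ofReal (c ^ (-s)) * limsup (fun t => F t / ENNReal.ofReal (t ^ s)) atTop := by
        rw [ENNReal.limsup_const_mul_of_ne_top ENNReal.ofReal_ne_top,
          limsup_comp_div_const_atTop (fun t => F t / ENNReal.ofReal (t ^ s)) hc0]

lemma liminf_div_rpow_le_of_le_comp_div
    (h : ∀ c : ℝ, 1 < c → ∀ᶠ t in atTop, G t ≤ F (t / c)) :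
    liminf (fun t => G t / ENNReal.ofReal (t ^ s)) atTop ≤
      liminf (fun t => F t / ENNReal.ofReal (t ^ s)) atTop := by
  refine le_of_forall_one_lt_le_ofReal_rpow_mul (-s) fun c hc => ?_
  have hc0 : 0 < c := one_pos.trans hc
  calc liminf (fun t => G t / ENNReal.ofReal (t ^ s)) atTop
      ≤ liminf (fun t => ENNReal.ofReal (c ^ (-s)) *
          (F (t / c) / ENNReal.ofReal ((t / c) ^ s))) atTop :=
        liminf_le_liminf (eventually_div_rpow_le_of_le_comp_div hc0 (h c hc))
    _ = ENNReal.ofReal (c ^ (-s)) * liminf (fun t => F t / ENNReal.ofReal (t ^ s)) atTop := by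
        rw [ENNReal.liminf_const_mul_of_ne_top ENNReal.ofReal_ne_top,
          liminf_comp_div_const_atTop (fun t => F t / ENNReal.ofReal (t ^ s)) hc0]

theorem limsup_liminf_div_rpow_eq_of_le_of_le_comp_div (hFG : ∀ t, F t ≤ G t)
    (hGF : ∀ c : ℝ, 1 < c → ∀ᶠ t in atTop, G t ≤ F (t / c)) :
    limsup (fun t => F t / ENNReal.ofReal (t ^ s)) atTop =
        limsup (fun t => G t / ENNReal.ofReal (t ^ s)) atTop ∧
      liminf (fun t => F t / ENNReal.ofReal (t ^ s)) atTop =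
        liminf (fun t => G t / ENNReal.ofReal (t ^ s)) atTop := by
  have hle : ∀ᶠ t in atTop, F t / ENNReal.ofReal (t ^ s) ≤ G t / ENNReal.ofReal (t ^ s) :=
    .of_forall fun t => ENNReal.div_le_div_right (hFG t) _
  exact ⟨le_antisymm (limsup_le_limsup hle) (limsup_div_rpow_le_of_le_comp_div hGF),
    le_antisymm (liminf_le_liminf hle) (liminf_div_rpow_le_of_le_comp_div hGF)⟩

end Rescaling

lemma norm_le_abs_add_abs (p : EuclideanSpace ℝ (Fin 2)) : ‖p‖ ≤ |p 0| + |p 1| := by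
  rw [EuclideanSpace.norm_eq, Fin.sum_univ_two, Real.sqrt_le_iff]
  simp only [Real.norm_eq_abs, sq_abs]
  constructor
  · positivity
  · nlinarith [mul_nonneg (abs_nonneg (p 0)) (abs_nonneg (p 1)), sq_abs (p 0), sq_abs (p 1)]

lemma max_abs_le_norm (p : EuclideanSpace ℝ (Fin 2)) : max |p 0| |p 1| ≤ ‖p‖ := by
  simpa only [Real.norm_eq_abs] using
    max_le (PiLp.norm_apply_le p 0) (PiLp.norm_apply_le p 1)

lemma eventually_div_le_sub (d : ℝ) {c : ℝ} (hc : 1 < c) :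
    ∀ᶠ t in atTop, t / c ≤ t - d := by
  filter_upwards [eventually_ge_atTop (c * d / (c - 1))] with t ht
  have hc1 : 0 < c - 1 := sub_pos.2 hc
  rw [div_le_iff₀ hc1] at ht
  rw [div_le_iff₀ (one_pos.trans hc)]
  nlinarith

lemma measure_norm_gt_le_measure_max_gt (μ : Measure (EuclideanSpace ℝ (Fin 2)))
    {Ω : Set (EuclideanSpace ℝ (Fin 2))} {d : ℝ} (hstrip : ∀ p ∈ Ω, |p 1| ≤ d) (t : ℝ) :
    μ {p ∈ Ω | t < ‖p‖} ≤ μ {p ∈ Ω | t - d < max |p 0| |p 1|} := by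
  refine measure_mono fun p ⟨hpΩ, hpt⟩ => ⟨hpΩ, ?_⟩
  linarith [norm_le_abs_add_abs p, hstrip p hpΩ, le_max_left |p 0| |p 1|]

theorem stmt_5_general (Ω : Set (EuclideanSpace ℝ (Fin 2)))
    (d : ℝ) (hstrip : ∀ p ∈ Ω, |p 1| ≤ d) (r : ℝ) :
    limsup (fun t : ℝ =>
        volume {p ∈ Ω | t < max |p 0| |p 1|} / ENNReal.ofReal (t ^ ((2 : ℝ) + r))) atTop =
      limsup (fun t : ℝ =>
        volume {p ∈ Ω | t < ‖p‖} / ENNReal.ofReal (t ^ ((2 : ℝ) + r))) atTop ∧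
    liminf (fun t : ℝ =>
        volume {p ∈ Ω | t < max |p 0| |p 1|} / ENNReal.ofReal (t ^ ((2 : ℝ) + r))) atTop =
      liminf (fun t : ℝ =>
        volume {p ∈ Ω | t < ‖p‖} / ENNReal.ofReal (t ^ ((2 : ℝ) + r))) atTop := by
  refine limsup_liminf_div_rpow_eq_of_le_of_le_comp_div (fun t => ?_) fun c hc => ?_
  · exact measure_mono fun p ⟨hpΩ, hpt⟩ => ⟨hpΩ, hpt.trans_le (max_abs_le_norm p)⟩
  · filter_upwards [eventually_div_le_sub d hc] with t ht
    exact (measure_norm_gt_le_measure_max_gt volume hstrip t).trans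
      (measure_mono fun p ⟨hpΩ, hpt⟩ => ⟨hpΩ, ht.trans_lt hpt⟩)

/-- If `Ω ⊆ ℝ²` has finite measure and lies in a horizontal strip
`{(x,y) : |y| ≤ d}`, then for every `r ∈ ℝ` the upper and lower `r`-dimensional Minkowski
contents of `Ω` at infinity computed with the sup-norm `|(x,y)|_∞ = max(|x|,|y|)` coincide
with those computed with the Euclidean norm. -/
theorem stmt_5 (Ω : Set (EuclideanSpace ℝ (Fin 2)))
    (hΩ : MeasurableSet Ω) (hfin : volume Ω < ⊤)
    (d : ℝ) (hd : 0 < d) (hstrip : ∀ p ∈ Ω, |p 1| ≤ d) (r : ℝ) :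
    limsup (fun t : ℝ =>
        volume {p ∈ Ω | t < max |p 0| |p 1|} / ENNReal.ofReal (t ^ ((2 : ℝ) + r))) atTop =
      limsup (fun t : ℝ =>
        volume {p ∈ Ω | t < ‖p‖} / ENNReal.ofReal (t ^ ((2 : ℝ) + r))) atTop ∧
    liminf (fun t : ℝ =>
        volume {p ∈ Ω | t < max |p 0| |p 1|} / ENNReal.ofReal (t ^ ((2 : ℝ) + r))) atTop =
      liminf (fun t : ℝ =>
        volume {p ∈ Ω | t < ‖p‖} / ENNReal.ofReal (t ^ ((2 : ℝ) + r))) atTop :=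
  stmt_5_general Ω d hstrip r
end

section
/- There exists a Lebesgue measurable set Ω ⊆ ℝ² with 0 < |Ω| < ∞ such that: (i) for every real r < -2, liminf_{t→+∞} V_Ω(t)/t^{2+r} = +∞ (so both the upper and lower r-dimensional Minkowski contents of Ω at infinity are +∞ for all r < -2), and (ii) V_Ω(t)/t^{0} → 0 as t → +∞, i.e., M^{-2}(∞,Ω) = 0. In particular dim_B(∞,Ω) = -2 and Ω is Minkowski degenerate at infinity. -/
open MeasureTheory Filter Set Real
open scoped Topology ENNReal

/-
A set of finite measure always has tails of measure tending to zero, which is (ii). For (i)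
take the cusp `Ω = {(x, y) : x > 2, 0 < y < 1 / (x log² x)}`: its part beyond `|p| > t` contains
the part with `x > t`, of area `∫_t^∞ dx / (x log² x) = 1 / log t`. This decays more slowly
than every power `t^{-s}`, `s > 0`, so `V_Ω(t) / t^{2+r} → ∞` for all `r < -2`.
-/

theorem tendsto_measure_sep_lt_norm_atTop {E : Type*} [NormedAddCommGroup E] [MeasurableSpace E]
    [OpensMeasurableSpace E] {μ : Measure E} {s : Set E} (hs : μ s ≠ ∞) :
    Tendsto (fun t : ℝ => μ {p ∈ s | t < ‖p‖}) atTop (𝓝 0) := by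
  have : IsFiniteMeasure (μ.restrict s) := isFiniteMeasure_restrict.2 hs
  have hmeas : ∀ t : ℝ, MeasurableSet {p : E | t < ‖p‖} := fun t =>
    measurableSet_lt measurable_const measurable_norm
  have htend := tendsto_measure_iInter_atTop (μ := μ.restrict s)
    (fun t => (hmeas t).nullMeasurableSet)
    (fun a b hab p (hp : b < ‖p‖) => (hab.trans_lt hp : a < ‖p‖)) ⟨0, measure_ne_top _ _⟩
  have hempty : ⋂ t : ℝ, {p : E | t < ‖p‖} = ∅ :=
    eq_empty_of_forall_notMem fun p hp => lt_irrefl ‖p‖ (mem_iInter.1 hp ‖p‖)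
  rw [hempty, measure_empty] at htend
  refine htend.congr fun t => ?_
  simp only [Function.comp_apply, Measure.restrict_apply (hmeas t), inter_comm]
  rfl

theorem tendsto_inv_log_div_rpow_atTop {a : ℝ} (ha : a < 0) :
    Tendsto (fun t => (log t)⁻¹ / t ^ a) atTop atTop := by
  have hlog_div : Tendsto (fun t => log t / t ^ (-a)) atTop (𝓝[>] 0) := by
    refine tendsto_nhdsWithin_iff.2
      ⟨(isLittleO_log_rpow_atTop (neg_pos.2 ha)).tendsto_div_nhds_zero, ?_⟩
    filter_upwards [eventually_gt_atTop 1] with t ht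
    exact div_pos (log_pos ht) (rpow_pos_of_pos (by linarith) _)
  refine hlog_div.inv_tendsto_nhdsGT_zero.congr' ?_
  filter_upwards [eventually_gt_atTop 0] with t ht
  rw [Pi.inv_apply, rpow_neg ht.le, inv_div, div_eq_mul_inv, div_eq_mul_inv, mul_comm]

theorem tendsto_div_ofReal_rpow_atTop_of_inv_log_le {V : ℝ → ℝ≥0∞}
    (hV : ∀ᶠ t in atTop, ENNReal.ofReal (log t)⁻¹ ≤ V t) {a : ℝ} (ha : a < 0) :
    Tendsto (fun t => V t / ENNReal.ofReal (t ^ a)) atTop (𝓝 ⊤) := by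
  refine tendsto_nhds_top_mono
    (ENNReal.tendsto_ofReal_atTop.comp (tendsto_inv_log_div_rpow_atTop ha)) ?_
  filter_upwards [hV, eventually_gt_atTop 0] with t hVt ht
  rw [Function.comp_apply, ENNReal.ofReal_div_of_pos (rpow_pos_of_pos ht _)]
  gcongr

theorem hasDerivAt_neg_inv_log {x : ℝ} (hx : 1 < x) :
    HasDerivAt (fun x => -(log x)⁻¹) (x * log x ^ 2)⁻¹ x := by
  exact ((hasDerivAt_log (by positivity)).inv (log_pos hx).ne').neg.congr_deriv (by ring)

theorem tendsto_neg_inv_log_atTop : Tendsto (fun x => -(log x)⁻¹) atTop (𝓝 0) := by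
  simpa using tendsto_log_atTop.inv_tendsto_atTop.neg

theorem inv_mul_log_sq_nonneg {x : ℝ} (hx : 0 ≤ x) : 0 ≤ (x * log x ^ 2)⁻¹ := by
  positivity

theorem integral_Ioi_inv_mul_log_sq {a : ℝ} (ha : 1 < a) :
    ∫ x in Ioi a, (x * log x ^ 2)⁻¹ = (log a)⁻¹ := by
  rw [integral_Ioi_of_hasDerivAt_of_nonneg' (l := 0)
    (fun x hx => hasDerivAt_neg_inv_log (ha.trans_le hx))
    (fun x hx => inv_mul_log_sq_nonneg (by linarith [mem_Ioi.1 hx]))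
    tendsto_neg_inv_log_atTop]
  ring

theorem integrableOn_Ioi_inv_mul_log_sq {a : ℝ} (ha : 1 < a) :
    IntegrableOn (fun x => (x * log x ^ 2)⁻¹) (Ioi a) :=
  integrableOn_Ioi_deriv_of_nonneg' (fun x hx => hasDerivAt_neg_inv_log (ha.trans_le hx))
    (fun x hx => inv_mul_log_sq_nonneg (by linarith [mem_Ioi.1 hx]))
    tendsto_neg_inv_log_atTop

def logCusp (a : ℝ) : Set (ℝ × ℝ) := regionBetween (fun _ => 0) (fun x => (x * log x ^ 2)⁻¹) (Ioi a)

theorem measurableSet_logCusp (a : ℝ) : MeasurableSet (logCusp a) :=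
  measurableSet_regionBetween measurable_const (by fun_prop) measurableSet_Ioi

theorem logCusp_anti : Antitone logCusp := fun _ _ hab _ hp =>
  ⟨lt_of_le_of_lt hab hp.1, hp.2⟩

theorem volume_logCusp {a : ℝ} (ha : 1 < a) : volume (logCusp a) = ENNReal.ofReal (log a)⁻¹ := by
  rw [logCusp, Measure.volume_eq_prod, volume_regionBetween_eq_integral integrableOn_zero
    (integrableOn_Ioi_inv_mul_log_sq ha) measurableSet_Ioi
    (fun x hx => inv_mul_log_sq_nonneg (by linarith [mem_Ioi.1 hx]))]
  simp only [Pi.sub_apply, sub_zero, integral_Ioi_inv_mul_log_sq ha]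

theorem measurePreserving_euclideanSpace_toProd :
    MeasurePreserving (fun p : EuclideanSpace ℝ (Fin 2) => (p 0, p 1)) volume volume :=
  (volume_preserving_piFinTwo fun _ => ℝ).comp
    (EuclideanSpace.volume_preserving_symm_measurableEquiv_toLp (Fin 2))

/-- There exists a Lebesgue measurable `Ω ⊆ ℝ²` with `0 < |Ω| < ∞` such that
(i) for every `r < -2` the lower (hence also the upper) `r`-dimensional Minkowski content
of `Ω` at infinity is `+∞`, and (ii) `V_Ω(t)/t^0 → 0` as `t → +∞`, i.e. `M^{-2}(∞,Ω) = 0`.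
In particular `dim_B(∞,Ω) = -2` and `Ω` is Minkowski degenerate at infinity. -/
theorem stmt_6 :
    ∃ Ω : Set (EuclideanSpace ℝ (Fin 2)),
      MeasurableSet Ω ∧ 0 < volume Ω ∧ volume Ω < ⊤ ∧
      (∀ r : ℝ, r < -2 →
        liminf (fun t : ℝ =>
            volume {p ∈ Ω | t < ‖p‖} / ENNReal.ofReal (t ^ ((2 : ℝ) + r))) atTop = ⊤ ∧
        limsup (fun t : ℝ =>
            volume {p ∈ Ω | t < ‖p‖} / ENNReal.ofReal (t ^ ((2 : ℝ) + r))) atTop = ⊤) ∧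
      Tendsto (fun t : ℝ =>
          (volume {p ∈ Ω | t < ‖p‖}).toReal / t ^ (0 : ℝ)) atTop (𝓝 0) := by
  set f := fun p : EuclideanSpace ℝ (Fin 2) => (p 0, p 1)
  have hf := measurePreserving_euclideanSpace_toProd
  have hvol : ∀ {a : ℝ}, 1 < a → volume (f ⁻¹' logCusp a) = ENNReal.ofReal (log a)⁻¹ :=
    fun ha => by rw [hf.measure_preimage (measurableSet_logCusp _).nullMeasurableSet,
      volume_logCusp ha]
  have htail : ∀ᶠ t in atTop,
      ENNReal.ofReal (log t)⁻¹ ≤ volume {p ∈ f ⁻¹' logCusp 2 | t < ‖p‖} := by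
    filter_upwards [eventually_ge_atTop 2] with t ht
    rw [← hvol (by linarith : (1 : ℝ) < t)]
    exact measure_mono fun p hp => ⟨logCusp_anti ht hp,
      hp.1.trans_le ((le_abs_self _).trans (PiLp.norm_apply_le p 0))⟩
  refine ⟨f ⁻¹' logCusp 2, hf.measurable (measurableSet_logCusp 2), ?_, ?_, fun r hr => ?_, ?_⟩
  · rw [hvol one_lt_two]
    exact ENNReal.ofReal_pos.2 (inv_pos.2 (log_pos one_lt_two))
  · exact (hvol one_lt_two).trans_lt ENNReal.ofReal_lt_top
  · have := tendsto_div_ofReal_rpow_atTop_of_inv_log_le htail (by linarith : 2 + r < 0)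
    exact ⟨this.liminf_eq, this.limsup_eq⟩
  · simpa [Function.comp_def] using (ENNReal.tendsto_toReal ENNReal.zero_ne_top).comp
      (tendsto_measure_sep_lt_norm_atTop ((hvol one_lt_two).trans_ne ENNReal.ofReal_ne_top))
end

section
/- Let N ≥ 1, let Ω ⊆ ℝ^N be Lebesgue measurable with |Ω| < ∞, let T > 0, and let Φ(x) := x/|x|² be the geometric inversion. Let s ∈ ℂ and assume that x ↦ |x|^{-Re(s)-N} is Lebesgue integrable on {x ∈ Ω : |x| > T}. Then ∫_{{x ∈ Ω : |x| > T}} |x|^{-s-N} dx = ∫_{Φ({x ∈ Ω : |x| > T})} |y|^{s-N} dy, where for a positive real c and w ∈ ℂ, c^w denotes the complex power. In other words, ζ_{∞,Ω}(s;T) = ζ_{0,Φ(Ω)}(s;1/T): the Lapidus zeta function of Ω at infinity equals the relative distance zeta function of the inverted drum (0, Φ(Ω)). -/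
/-! The map `x ↦ x / ‖x‖²` is the inversion in the unit sphere. Its derivative at `x` is
`‖x‖⁻²` times a reflection, so its Jacobian is `‖x‖^(-2N)`, and it sends `‖x‖` to `‖x‖⁻¹`;
the change-of-variables formula then turns `‖y‖^(s-N) dy` into
`‖x‖^(-2N) ‖x‖^(N-s) dx = ‖x‖^(-s-N) dx`. -/

open MeasureTheory EuclideanGeometry Module

section Inversion

variable {F : Type*} [NormedAddCommGroup F] [InnerProductSpace ℝ F]

theorem inversion_zero_one_apply (x : F) : inversion 0 1 x = (‖x‖ ^ 2)⁻¹ • x := by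
  simp [inversion_def, dist_eq_norm, inv_pow]

theorem abs_det_smul_reflection [FiniteDimensional ℝ F] (a : ℝ) (K : Submodule ℝ F) :
    |(a • (K.reflection : F →L[ℝ] F)).det| = |a| ^ finrank ℝ F := by
  have hdet : (a • (K.reflection : F →L[ℝ] F)).det = a ^ finrank ℝ F * (-1) ^ finrank ℝ Kᗮ :=
    (LinearMap.det_smul a _).trans (congrArg _ K.det_reflection)
  rw [hdet, abs_mul, abs_pow, abs_pow, abs_neg, abs_one, one_pow, mul_one]

theorem setIntegral_image_inversion {G : Type*} [NormedAddCommGroup G] [NormedSpace ℝ G]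
    [FiniteDimensional ℝ F] [MeasurableSpace F] [BorelSpace F] (μ : Measure F) [μ.IsAddHaarMeasure]
    {c : F} {R : ℝ} (hR : R ≠ 0) {A : Set F} (hA : MeasurableSet A) (hcA : c ∉ A) (g : F → G) :
    ∫ y in inversion c R '' A, g y ∂μ =
      ∫ x in A, (R / dist x c) ^ (2 * finrank ℝ F) • g (inversion c R x) ∂μ := by
  have hderiv : ∀ x ∈ A, HasFDerivWithinAt (inversion c R)
      ((R / dist x c) ^ 2 • ((ℝ ∙ (x - c))ᗮ.reflection : F →L[ℝ] F)) A x :=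
    fun x hx => (hasFDerivAt_inversion (ne_of_mem_of_not_mem hx hcA)).hasFDerivWithinAt
  rw [integral_image_eq_integral_abs_det_fderiv_smul μ hA hderiv
    (inversion_injective c hR).injOn]
  refine setIntegral_congr_fun hA fun x _ => ?_
  rw [abs_det_smul_reflection, abs_of_nonneg (sq_nonneg _), pow_mul]

end Inversion

theorem ofReal_inv_pow_smul_inv_cpow {r : ℝ} (hr : 0 < r) (n : ℕ) (s : ℂ) :
    (r⁻¹ ^ (2 * n)) • ((r⁻¹ : ℝ) : ℂ) ^ (s - n) = (r : ℂ) ^ (-s - n) := by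
  have harg : (r : ℂ).arg ≠ Real.pi := by
    rw [Complex.arg_ofReal_of_nonneg hr.le]; exact Real.pi_ne_zero.symm
  have hr0 : (r : ℂ) ≠ 0 := by exact_mod_cast hr.ne'
  rw [Complex.real_smul, Complex.ofReal_inv, Complex.inv_cpow _ _ harg, ← Complex.cpow_neg]
  push_cast
  rw [inv_pow, ← Complex.cpow_natCast, ← Complex.cpow_neg, ← Complex.cpow_add _ _ hr0]
  push_cast
  ring_nf

theorem stmt_8_general (N : ℕ)
    (Ω : Set (EuclideanSpace ℝ (Fin N)))
    (hΩ : MeasurableSet Ω)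
    (T : ℝ) (hT : 0 < T) (s : ℂ) :
    ∫ x in {x ∈ Ω | T < ‖x‖}, (‖x‖ : ℂ) ^ (-s - (N : ℂ)) =
      ∫ y in (fun x : EuclideanSpace ℝ (Fin N) => (‖x‖ ^ 2)⁻¹ • x) '' {x ∈ Ω | T < ‖x‖},
        (‖y‖ : ℂ) ^ (s - (N : ℂ)) := by
  have hA : MeasurableSet {x ∈ Ω | T < ‖x‖} :=
    hΩ.inter (measurableSet_lt measurable_const measurable_norm)
  have h0 : (0 : EuclideanSpace ℝ (Fin N)) ∉ {x ∈ Ω | T < ‖x‖} := fun h => by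
    simpa [hT.le.not_gt] using h.2
  rw [show (fun x : EuclideanSpace ℝ (Fin N) => (‖x‖ ^ 2)⁻¹ • x) = inversion 0 1 from
      funext fun x => (inversion_zero_one_apply x).symm,
    setIntegral_image_inversion volume one_ne_zero hA h0]
  refine setIntegral_congr_fun hA fun x hx => ?_
  have hnorm : ‖inversion 0 1 x‖ = ‖x‖⁻¹ := by
    rw [← dist_zero_right, dist_inversion_center, dist_zero_right, one_pow, one_div]
  rw [hnorm, dist_zero_right, one_div, finrank_euclideanSpace_fin,
    ofReal_inv_pow_smul_inv_cpow (hT.trans hx.2)]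

/-- For measurable `Ω ⊆ ℝ^N` with `|Ω| < ∞`, `T > 0`, and `s ∈ ℂ` such that
`x ↦ |x|^{-Re s - N}` is integrable on `{x ∈ Ω : |x| > T}`, the Lapidus zeta function of
`Ω` at infinity equals the distance zeta function of the drum obtained by the geometric
inversion `Φ(x) = x/|x|²`:
`∫_{{x∈Ω : |x|>T}} |x|^{-s-N} dx = ∫_{Φ({x∈Ω : |x|>T})} |y|^{s-N} dy`. -/
theorem stmt_8 (N : ℕ) (hN : 1 ≤ N)
    (Ω : Set (EuclideanSpace ℝ (Fin N)))
    (hΩ : MeasurableSet Ω) (hfin : volume Ω < ⊤)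
    (T : ℝ) (hT : 0 < T) (s : ℂ)
    (hint : IntegrableOn (fun x : EuclideanSpace ℝ (Fin N) => ‖x‖ ^ (-s.re - (N : ℝ)))
      {x ∈ Ω | T < ‖x‖} volume) :
    ∫ x in {x ∈ Ω | T < ‖x‖}, (‖x‖ : ℂ) ^ (-s - (N : ℂ)) =
      ∫ y in (fun x : EuclideanSpace ℝ (Fin N) => (‖x‖ ^ 2)⁻¹ • x) '' {x ∈ Ω | T < ‖x‖},
        (‖y‖ : ℂ) ^ (s - (N : ℂ)) :=
  stmt_8_general N Ω hΩ T hT s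
end

section
/- Let N ≥ 1, let Ω ⊆ ℝ^N be Lebesgue measurable with |Ω| < ∞, let T > 0, and let D ∈ ℝ be such that for every r > D, limsup_{t→+∞} V_Ω(t)/t^{N+r} = 0 (i.e., D is at least the upper box dimension of Ω at infinity). Then for every s ∈ ℂ with Re s > D, the function x ↦ |x|^{-s-N} is Lebesgue integrable on {x ∈ Ω : |x| > T}; the Lapidus zeta function at infinity ζ_{∞,Ω}(s) := ∫_{{x ∈ Ω : |x| > T}} |x|^{-s-N} dx is holomorphic on the half-plane {s ∈ ℂ : Re s > D}; and on this half-plane its complex derivative is ζ'_{∞,Ω}(s) = -∫_{{x ∈ Ω : |x| > T}} |x|^{-s-N}·log|x| dx. -/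
open MeasureTheory Filter
open scoped Topology ENNReal
open Set

/-!
On `A = {x ∈ Ω | T < ‖x‖}` the real power `‖x‖ ^ p` is bounded by `T ^ p` when `p ≤ 0`. When
`p = -σ - N > 0` with `σ > D`, pick `D < r < σ`: the hypothesis gives `V_Ω(t) ≤ t ^ (N + r)` for
large `t`, and the layer cake formula turns this tail bound into integrability, because
`p + N + r = r - σ < 0`. Then `|x| ^ (-s - N) log |x|` is dominated, locally uniformly in `s`, by
two integrable real powers, so one may differentiate under the integral sign.
-/

namespace Real

lemma rpow_le_rpow_add_rpow {y a u v : ℝ} (hy : 0 < y) (hu : u ≤ a) (hv : a ≤ v) :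
    y ^ a ≤ y ^ u + y ^ v := by
  rcases le_or_gt 1 y with hy1 | hy1
  · linarith [rpow_le_rpow_of_exponent_le hy1 hv, rpow_nonneg hy.le u]
  · linarith [rpow_le_rpow_of_exponent_ge hy hy1.le hu, rpow_nonneg hy.le v]

lemma rpow_mul_abs_log_le {y a b δ : ℝ} (hy : 0 < y) (hδ : 0 < δ) (hab : |a - b| ≤ δ) :
    y ^ a * |log y| ≤ δ⁻¹ * (y ^ (b - 2 * δ) + y ^ (b + 2 * δ)) := by
  obtain ⟨hab₁, hab₂⟩ := abs_le.mp hab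
  rcases le_or_gt 1 y with hy1 | hy1
  · calc y ^ a * |log y| ≤ y ^ (b + δ) * (y ^ δ / δ) := by
          rw [abs_of_nonneg (log_nonneg hy1)]
          exact mul_le_mul (rpow_le_rpow_of_exponent_le hy1 (by linarith))
            (log_le_rpow_div hy.le hδ) (log_nonneg hy1) (rpow_nonneg hy.le _)
      _ = δ⁻¹ * y ^ (b + 2 * δ) := by
          rw [mul_div_assoc', ← rpow_add hy]; ring_nf
      _ ≤ δ⁻¹ * (y ^ (b - 2 * δ) + y ^ (b + 2 * δ)) := by
          gcongr; linarith [rpow_nonneg hy.le (b - 2 * δ)]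
  · calc y ^ a * |log y| ≤ y ^ (b - δ) * (y⁻¹ ^ δ / δ) := by
          rw [abs_of_neg (log_neg hy hy1), ← log_inv]
          exact mul_le_mul (rpow_le_rpow_of_exponent_ge hy hy1.le (by linarith))
            (log_le_rpow_div (inv_nonneg.mpr hy.le) hδ)
            (log_nonneg ((one_le_inv₀ hy).mpr hy1.le)) (rpow_nonneg hy.le _)
      _ = δ⁻¹ * y ^ (b - 2 * δ) := by
          rw [inv_rpow hy.le, ← rpow_neg hy.le, mul_div_assoc', ← rpow_add hy]; ring_nf
      _ ≤ δ⁻¹ * (y ^ (b - 2 * δ) + y ^ (b + 2 * δ)) := by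
          gcongr; linarith [rpow_nonneg hy.le (b + 2 * δ)]

end Real

lemma ENNReal.eventually_le_of_limsup_div_eq_zero {α : Type*} {l : Filter α} {f g : α → ℝ≥0∞}
    (h : limsup (fun t => f t / g t) l = 0) : ∀ᶠ t in l, f t ≤ g t := by
  filter_upwards [eventually_lt_of_limsup_lt (h.trans_lt zero_lt_one)] with t ht
  simpa using (ENNReal.div_le_iff_le_mul (by simp) (by simp)).mp ht.le

/-- Layer cake: `∫ f ^ p = p ∫₀^∞ t ^ (p - 1) μ{t < f} dt`, and the tail bound makes the
integrand `O(t ^ (p + q - 1))` at infinity, with `p + q - 1 < -1`. -/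
lemma integrable_rpow_of_meas_lt_le_rpow {α : Type*} [MeasurableSpace α] {μ : Measure α}
    [IsFiniteMeasure μ] {f : α → ℝ} (hf : AEMeasurable f μ) (hf_nn : 0 ≤ᵐ[μ] f)
    {p q t₀ : ℝ} (hp : 0 < p) (hpq : p + q < 0) (ht₀ : 0 < t₀)
    (htail : ∀ t, t₀ ≤ t → μ {a | t < f a} ≤ ENNReal.ofReal (t ^ q)) :
    Integrable (fun a => f a ^ p) μ := by
  have hfp_nn : 0 ≤ᵐ[μ] fun a => f a ^ p := by
    filter_upwards [hf_nn] with a ha using Real.rpow_nonneg ha p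
  refine ⟨(hf.pow_const p).aestronglyMeasurable, ?_⟩
  rw [hasFiniteIntegral_iff_ofReal hfp_nn,
    lintegral_rpow_eq_lintegral_meas_lt_mul μ hf_nn hf hp,
    ← Ioc_union_Ioi_eq_Ioi ht₀.le]
  refine ENNReal.mul_lt_top ENNReal.ofReal_lt_top
    ((lintegral_union_le _ _ _).trans_lt (ENNReal.add_lt_top.mpr ⟨?_, ?_⟩))
  · have hint : IntegrableOn (fun t : ℝ => t ^ (p - 1)) (Ioc 0 t₀) :=
      (intervalIntegrable_iff_integrableOn_Ioc_of_le ht₀.le).mp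
        (intervalIntegral.intervalIntegrable_rpow' (by linarith))
    calc ∫⁻ t in Ioc 0 t₀, μ {a | t < f a} * ENNReal.ofReal (t ^ (p - 1))
        ≤ ∫⁻ t in Ioc 0 t₀, μ univ * ENNReal.ofReal (t ^ (p - 1)) :=
          lintegral_mono fun t => mul_le_mul_left (measure_mono (subset_univ _)) _
      _ = μ univ * ∫⁻ t in Ioc 0 t₀, ENNReal.ofReal (t ^ (p - 1)) :=
          lintegral_const_mul _ (by fun_prop)
      _ < ∞ := ENNReal.mul_lt_top (measure_lt_top μ univ) hint.lintegral_lt_top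
  · have hint : IntegrableOn (fun t : ℝ => t ^ (q + (p - 1))) (Ioi t₀) :=
      integrableOn_Ioi_rpow_of_lt (by linarith) ht₀
    calc ∫⁻ t in Ioi t₀, μ {a | t < f a} * ENNReal.ofReal (t ^ (p - 1))
        ≤ ∫⁻ t in Ioi t₀, ENNReal.ofReal (t ^ (q + (p - 1))) := by
          refine setLIntegral_mono' measurableSet_Ioi fun t ht => ?_
          have ht0 : 0 < t := ht₀.trans ht
          rw [Real.rpow_add ht0, ENNReal.ofReal_mul (Real.rpow_nonneg ht0.le _)]
          exact mul_le_mul_left (htail t (le_of_lt ht)) _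
      _ < ∞ := hint.lintegral_lt_top

section NormedSpace

variable {E : Type*} [NormedAddCommGroup E] [MeasurableSpace E] [OpensMeasurableSpace E]
  {μ : Measure E} {Ω : Set E} {T : ℝ}

lemma ae_restrict_lt_norm : ∀ᵐ x ∂μ.restrict {x ∈ Ω | T < ‖x‖}, T < ‖x‖ :=
  ae_restrict_of_ae_restrict_of_subset (fun _ hx => hx.2)
    (ae_restrict_mem (measurableSet_lt measurable_const measurable_norm))

lemma integrableOn_norm_rpow_of_meas_lt_norm_le (hΩ : μ Ω < ∞) (hT : 0 < T) {p e : ℝ}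
    (hpe : p + e < 0) (htail : ∀ᶠ t in atTop, μ {x ∈ Ω | t < ‖x‖} ≤ ENNReal.ofReal (t ^ e)) :
    IntegrableOn (fun x => ‖x‖ ^ p) {x ∈ Ω | T < ‖x‖} μ := by
  have : IsFiniteMeasure (μ.restrict {x ∈ Ω | T < ‖x‖}) :=
    isFiniteMeasure_restrict.mpr (measure_mono (fun _ hx => hx.1) |>.trans_lt hΩ).ne
  rcases le_or_gt p 0 with hp | hp
  · refine Integrable.of_bound (measurable_norm.pow_const p).aestronglyMeasurable (T ^ p) ?_
    filter_upwards [ae_restrict_lt_norm] with x hx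
    rw [Real.norm_of_nonneg (Real.rpow_nonneg (norm_nonneg x) p)]
    exact Real.rpow_le_rpow_of_nonpos hT hx.le hp
  · obtain ⟨t₀, ht₀⟩ := (htail.and (eventually_gt_atTop 0)).exists_forall_of_atTop
    refine integrable_rpow_of_meas_lt_le_rpow measurable_norm.aemeasurable
      (ae_of_all _ fun x => norm_nonneg x) hp hpe (ht₀ t₀ le_rfl).2 fun t ht => ?_
    rw [Measure.restrict_apply (measurableSet_lt measurable_const measurable_norm)]
    refine (measure_mono ?_).trans (ht₀ t ht).1
    exact fun x hx => ⟨hx.2.1, hx.1⟩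

end NormedSpace

section ComplexPower

variable {α : Type*} [MeasurableSpace α] {μ : Measure α} {g : α → ℝ}

lemma integrable_ofReal_cpow (hg : AEMeasurable g μ) (hg_pos : ∀ᵐ x ∂μ, 0 < g x) {w : ℂ}
    (h : Integrable (fun x => g x ^ w.re) μ) : Integrable (fun x => (g x : ℂ) ^ w) μ := by
  refine h.mono'
    ((Complex.measurable_ofReal.comp_aemeasurable hg).pow_const w).aestronglyMeasurable ?_
  filter_upwards [hg_pos] with x hx
  rw [Complex.norm_cpow_eq_rpow_re_of_pos hx]

lemma hasDerivAt_integral_ofReal_cpow (hg : AEMeasurable g μ) (hg_pos : ∀ᵐ x ∂μ, 0 < g x)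
    {w : ℂ} {δ : ℝ} (hδ : 0 < δ) (hlo : Integrable (fun x => g x ^ (w.re - 2 * δ)) μ)
    (hhi : Integrable (fun x => g x ^ (w.re + 2 * δ)) μ) :
    HasDerivAt (fun w => ∫ x, (g x : ℂ) ^ w ∂μ)
      (∫ x, (g x : ℂ) ^ w * (Real.log (g x) : ℂ) ∂μ) w := by
  have hmeas : ∀ z : ℂ, AEStronglyMeasurable (fun x => (g x : ℂ) ^ z) μ := fun z =>
    ((Complex.measurable_ofReal.comp_aemeasurable hg).pow_const z).aestronglyMeasurable
  have hint : Integrable (fun x => g x ^ w.re) μ := by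
    refine (hlo.add hhi).mono' (hg.pow_const _).aestronglyMeasurable ?_
    filter_upwards [hg_pos] with x hx
    rw [Real.norm_of_nonneg (Real.rpow_nonneg hx.le _)]
    exact Real.rpow_le_rpow_add_rpow hx (by linarith) (by linarith)
  refine (hasDerivAt_integral_of_dominated_loc_of_deriv_le (Metric.ball_mem_nhds w hδ)
    (Eventually.of_forall hmeas) (integrable_ofReal_cpow hg hg_pos hint)
    ((hmeas w).mul (Complex.measurable_ofReal.comp_aemeasurable
      (Real.measurable_log.comp_aemeasurable hg)).aestronglyMeasurable)
    (F' := fun z x => (g x : ℂ) ^ z * (Real.log (g x) : ℂ))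
    (bound := fun x => δ⁻¹ * (g x ^ (w.re - 2 * δ) + g x ^ (w.re + 2 * δ)))
    ?_ ((hlo.add hhi).const_mul δ⁻¹) ?_).2
  · filter_upwards [hg_pos] with x hx z hz
    rw [norm_mul, Complex.norm_cpow_eq_rpow_re_of_pos hx, Complex.norm_real, Real.norm_eq_abs]
    refine Real.rpow_mul_abs_log_le hx hδ ?_
    rw [← Complex.sub_re]
    exact (Complex.abs_re_le_norm _).trans (mem_ball_iff_norm.mp hz).le
  · filter_upwards [hg_pos] with x hx z _
    rw [Complex.ofReal_log hx.le]
    exact Complex.hasStrictDerivAt_const_cpow (Or.inl (by exact_mod_cast hx.ne')) |>.hasDerivAt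

end ComplexPower

theorem stmt_11_general (N : ℕ)
    (Ω : Set (EuclideanSpace ℝ (Fin N)))
    (hfin : volume Ω < ⊤)
    (T : ℝ) (hT : 0 < T) (D : ℝ)
    (hD : ∀ r : ℝ, D < r →
      limsup (fun t : ℝ =>
        volume {x ∈ Ω | t < ‖x‖} / ENNReal.ofReal (t ^ ((N : ℝ) + r))) atTop = 0) :
    (∀ s : ℂ, D < s.re →
      IntegrableOn (fun x : EuclideanSpace ℝ (Fin N) => (‖x‖ : ℂ) ^ (-s - (N : ℂ)))
        {x ∈ Ω | T < ‖x‖} volume) ∧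
    DifferentiableOn ℂ
      (fun s : ℂ => ∫ x in {x ∈ Ω | T < ‖x‖}, (‖x‖ : ℂ) ^ (-s - (N : ℂ)))
      {s : ℂ | D < s.re} ∧
    ∀ s : ℂ, D < s.re →
      HasDerivAt (fun s : ℂ => ∫ x in {x ∈ Ω | T < ‖x‖}, (‖x‖ : ℂ) ^ (-s - (N : ℂ)))
        (-∫ x in {x ∈ Ω | T < ‖x‖},
            (‖x‖ : ℂ) ^ (-s - (N : ℂ)) * (Real.log ‖x‖ : ℂ)) s := by
  set A := {x ∈ Ω | T < ‖x‖}
  have hpos : ∀ᵐ x ∂volume.restrict A, 0 < ‖x‖ :=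
    ae_restrict_lt_norm.mono fun _ hx => hT.trans hx
  have hreal : ∀ u : ℝ, u < -D - N → Integrable (fun x => ‖x‖ ^ u) (volume.restrict A) :=
    fun u hu => integrableOn_norm_rpow_of_meas_lt_norm_le hfin hT (e := N + (D - u - N) / 2)
      (by linarith) (ENNReal.eventually_le_of_limsup_div_eq_zero (hD _ (by linarith)))
  have hre : ∀ s : ℂ, (-s - N).re = -s.re - N := fun s => by simp
  have hderiv : ∀ s : ℂ, D < s.re →
      HasDerivAt (fun s : ℂ => ∫ x in A, (‖x‖ : ℂ) ^ (-s - (N : ℂ)))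
        (-∫ x in A, (‖x‖ : ℂ) ^ (-s - (N : ℂ)) * (Real.log ‖x‖ : ℂ)) s := by
    intro s hs
    have hδ : 0 < (s.re - D) / 3 := by linarith
    have hF := hasDerivAt_integral_ofReal_cpow measurable_norm.aemeasurable hpos
      (w := -s - N) hδ
      (hreal _ (by rw [hre]; linarith)) (hreal _ (by rw [hre]; linarith))
    have := hF.comp s ((hasDerivAt_neg s).sub_const (N : ℂ))
    rwa [mul_neg_one] at this
  exact ⟨fun s hs => integrable_ofReal_cpow measurable_norm.aemeasurable hpos
      (hreal _ (by rw [hre]; linarith)),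
    fun s hs => (hderiv s hs).differentiableAt.differentiableWithinAt, hderiv⟩

/-- For measurable `Ω ⊆ ℝ^N` with `|Ω| < ∞`, `T > 0`, and `D ∈ ℝ` with
`limsup_{t→∞} V_Ω(t)/t^{N+r} = 0` for every `r > D`: for every `s ∈ ℂ` with `Re s > D`
the function `x ↦ |x|^{-s-N}` is integrable on `{x ∈ Ω : |x| > T}`; the Lapidus zeta
function at infinity `ζ_{∞,Ω}(s) = ∫_{{x∈Ω:|x|>T}} |x|^{-s-N} dx` is holomorphic on
`{Re s > D}`; and there its derivative is `-∫_{{x∈Ω:|x|>T}} |x|^{-s-N}·log|x| dx`. -/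
theorem stmt_11 (N : ℕ) (hN : 1 ≤ N)
    (Ω : Set (EuclideanSpace ℝ (Fin N)))
    (hΩ : MeasurableSet Ω) (hfin : volume Ω < ⊤)
    (T : ℝ) (hT : 0 < T) (D : ℝ)
    (hD : ∀ r : ℝ, D < r →
      limsup (fun t : ℝ =>
        volume {x ∈ Ω | t < ‖x‖} / ENNReal.ofReal (t ^ ((N : ℝ) + r))) atTop = 0) :
    (∀ s : ℂ, D < s.re →
      IntegrableOn (fun x : EuclideanSpace ℝ (Fin N) => (‖x‖ : ℂ) ^ (-s - (N : ℂ)))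
        {x ∈ Ω | T < ‖x‖} volume) ∧
    DifferentiableOn ℂ
      (fun s : ℂ => ∫ x in {x ∈ Ω | T < ‖x‖}, (‖x‖ : ℂ) ^ (-s - (N : ℂ)))
      {s : ℂ | D < s.re} ∧
    ∀ s : ℂ, D < s.re →
      HasDerivAt (fun s : ℂ => ∫ x in {x ∈ Ω | T < ‖x‖}, (‖x‖ : ℂ) ^ (-s - (N : ℂ)))
        (-∫ x in {x ∈ Ω | T < ‖x‖},
            (‖x‖ : ℂ) ^ (-s - (N : ℂ)) * (Real.log ‖x‖ : ℂ)) s :=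
  stmt_11_general N Ω hfin T hT D hD
end

section
/- Let N ≥ 1, let Ω ⊆ ℝ^N be Lebesgue measurable with |Ω| < ∞, and let T > 0. Let s, r ∈ ℝ with s < r and suppose limsup_{t→+∞} V_Ω(t)/t^{N+r} = +∞ (i.e., r, and hence s, lies strictly below the upper box dimension of Ω at infinity). Then ∫_{{x ∈ Ω : |x| > T}} |x|^{-s-N} dx = +∞ (the Lebesgue integral of this nonnegative function diverges). Combined with the holomorphy of ζ_{∞,Ω} on {Re s > dim̄_B(∞,Ω)}, this shows that the abscissa of convergence of ζ_{∞,Ω} equals the upper box dimension of Ω at infinity. -/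
/-!
Since `V_Ω(t) ≤ |Ω| < ∞`, the ratio `V_Ω(t) / t^(N+r)` can only be unbounded if `N + r < 0`,
so the exponent `-s-N` is positive. On `{x ∈ Ω : |x| > t}` the integrand is then at least
`t^(-s-N) ≥ t^(-N-r)` for `t ≥ 1`, whence the integral dominates `V_Ω(t) / t^(N+r)` for all
large `t`, and so dominates its limsup `+∞`.
-/

open MeasureTheory Filter
open scoped ENNReal

section

variable {α : Type*} [MeasurableSpace α] {μ : Measure α} {f : α → ℝ} {Ω : Set α}

theorem neg_of_limsup_measure_div_rpow_eq_top (hΩ : μ Ω ≠ ⊤) {a : ℝ}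
    (h : limsup (fun t : ℝ => μ {x ∈ Ω | t < f x} / ENNReal.ofReal (t ^ a)) atTop = ⊤) :
    a < 0 := by
  by_contra! ha
  have hbound : ∀ᶠ t in atTop, μ {x ∈ Ω | t < f x} / ENNReal.ofReal (t ^ a) ≤ μ Ω := by
    filter_upwards [eventually_ge_atTop (1 : ℝ)] with t ht
    have hden : 1 ≤ ENNReal.ofReal (t ^ a) := ENNReal.one_le_ofReal.mpr (Real.one_le_rpow ht ha)
    calc μ {x ∈ Ω | t < f x} / ENNReal.ofReal (t ^ a) ≤ μ Ω / 1 :=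
          ENNReal.div_le_div (measure_mono (Set.sep_subset _ _)) hden
      _ = μ Ω := div_one _
  have := limsup_le_of_le (by isBoundedDefault) hbound
  exact hΩ (top_le_iff.mp (h ▸ this))

theorem rpow_mul_measure_le_setLIntegral_rpow (hf : Measurable f) {t p : ℝ} (ht : 0 ≤ t)
    (hp : 0 ≤ p) :
    ENNReal.ofReal (t ^ p) * μ {x ∈ Ω | t < f x} ≤
      ∫⁻ x in {x ∈ Ω | t < f x}, ENNReal.ofReal (f x ^ p) ∂μ := by
  rw [← setLIntegral_const]
  refine setLIntegral_mono (hf.pow_const p).ennreal_ofReal fun x hx => ?_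
  exact ENNReal.ofReal_le_ofReal (Real.rpow_le_rpow ht hx.2.le hp)

theorem measure_div_rpow_le_setLIntegral_rpow (hf : Measurable f) {T t a p : ℝ} (hTt : T ≤ t)
    (ht : 1 ≤ t) (hp : 0 ≤ p) (hap : 0 ≤ a + p) :
    μ {x ∈ Ω | t < f x} / ENNReal.ofReal (t ^ a) ≤
      ∫⁻ x in {x ∈ Ω | T < f x}, ENNReal.ofReal (f x ^ p) ∂μ := by
  have ht0 : 0 < t := zero_lt_one.trans_le ht
  calc μ {x ∈ Ω | t < f x} / ENNReal.ofReal (t ^ a)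
      = ENNReal.ofReal (t ^ (-a)) * μ {x ∈ Ω | t < f x} := by
        rw [ENNReal.div_eq_inv_mul, ← ENNReal.ofReal_inv_of_pos (by positivity),
          Real.rpow_neg ht0.le]
    _ ≤ ENNReal.ofReal (t ^ p) * μ {x ∈ Ω | t < f x} := by
        gcongr
        linarith
    _ ≤ ∫⁻ x in {x ∈ Ω | t < f x}, ENNReal.ofReal (f x ^ p) ∂μ :=
        rpow_mul_measure_le_setLIntegral_rpow hf ht0.le hp
    _ ≤ ∫⁻ x in {x ∈ Ω | T < f x}, ENNReal.ofReal (f x ^ p) ∂μ :=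
        lintegral_mono_set fun x hx => ⟨hx.1, hTt.trans_lt hx.2⟩

theorem setLIntegral_rpow_eq_top_of_limsup_measure_div_rpow_eq_top (hf : Measurable f)
    (hΩ : μ Ω ≠ ⊤) (T : ℝ) {a p : ℝ} (hap : 0 < a + p)
    (h : limsup (fun t : ℝ => μ {x ∈ Ω | t < f x} / ENNReal.ofReal (t ^ a)) atTop = ⊤) :
    ∫⁻ x in {x ∈ Ω | T < f x}, ENNReal.ofReal (f x ^ p) ∂μ = ⊤ := by
  have hp : 0 ≤ p := by linarith [neg_of_limsup_measure_div_rpow_eq_top hΩ h]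
  have hbound : ∀ᶠ t in atTop, μ {x ∈ Ω | t < f x} / ENNReal.ofReal (t ^ a) ≤
      ∫⁻ x in {x ∈ Ω | T < f x}, ENNReal.ofReal (f x ^ p) ∂μ := by
    filter_upwards [eventually_ge_atTop T, eventually_ge_atTop 1] with t hTt ht
    exact measure_div_rpow_le_setLIntegral_rpow hf hTt ht hp hap.le
  exact top_le_iff.mp (h ▸ limsup_le_of_le (by isBoundedDefault) hbound)

end

theorem stmt_12_general (N : ℕ)
    (Ω : Set (EuclideanSpace ℝ (Fin N)))
    (hfin : volume Ω < ⊤)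
    (T : ℝ) (s r : ℝ) (hsr : s < r)
    (hinf : limsup (fun t : ℝ =>
        volume {x ∈ Ω | t < ‖x‖} / ENNReal.ofReal (t ^ ((N : ℝ) + r))) atTop = ⊤) :
    ∫⁻ x in {x ∈ Ω | T < ‖x‖}, ENNReal.ofReal (‖x‖ ^ (-s - (N : ℝ))) = ⊤ :=
  setLIntegral_rpow_eq_top_of_limsup_measure_div_rpow_eq_top (f := (‖·‖)) measurable_norm
    hfin.ne T (by linarith) hinf

/-- For measurable `Ω ⊆ ℝ^N` with `|Ω| < ∞`, `T > 0`, and reals `s < r`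
with `limsup_{t→∞} V_Ω(t)/t^{N+r} = +∞` (so `s` lies strictly below the upper box dimension
of `Ω` at infinity), the Lebesgue integral `∫_{{x∈Ω:|x|>T}} |x|^{-s-N} dx` of the
nonnegative integrand diverges, i.e. equals `+∞`. -/
theorem stmt_12 (N : ℕ) (hN : 1 ≤ N)
    (Ω : Set (EuclideanSpace ℝ (Fin N)))
    (hΩ : MeasurableSet Ω) (hfin : volume Ω < ⊤)
    (T : ℝ) (hT : 0 < T) (s r : ℝ) (hsr : s < r)
    (hinf : limsup (fun t : ℝ =>
        volume {x ∈ Ω | t < ‖x‖} / ENNReal.ofReal (t ^ ((N : ℝ) + r))) atTop = ⊤) :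
    ∫⁻ x in {x ∈ Ω | T < ‖x‖}, ENNReal.ofReal (‖x‖ ^ (-s - (N : ℝ))) = ⊤ :=
  stmt_12_general N Ω hfin T s r hsr hinf
end

section
/- Let N ≥ 1, let Ω ⊆ ℝ^N be Lebesgue measurable with |Ω| < ∞, let T > 0, and let D ∈ ℝ with D < -N. Assume liminf_{t→+∞} V_Ω(t)/t^{N+D} > 0 and that for every r > D, limsup_{t→+∞} V_Ω(t)/t^{N+r} = 0 (so D = dim_B(∞,Ω) exists and the lower D-dimensional Minkowski content of Ω at infinity is positive). Then ζ_{∞,Ω}(s) = ∫_{{x ∈ Ω : |x| > T}} |x|^{-s-N} dx → +∞ as real s → D⁺. -/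
/-!
Write `α = -s - N > 0` and `V(t) = |{x ∈ Ω : |x| > t}|`. By the layer-cake formula the zeta
function is `α ∫_0^∞ V(max t T) t^(α-1) dt`. The positive lower content gives `V(t) ≥ c t^(N+D)`
for `t ≥ t₀`, hence `ζ(s) ≥ α c t₀^(D-s) / (s - D)`, which blows up as `s → D⁺`. The vanishing
upper content at `r = (D + s)/2` gives `V(t) ≤ t^(N+r)`, so the integral is finite and the
Bochner integral is not the junk value `0`.
-/

open MeasureTheory Filter Set
open scoped Topology ENNReal

theorem lintegral_ofReal_rpow_Ioi {q a : ℝ} (hq : q < -1) (ha : 0 < a) :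
    ∫⁻ t in Ioi a, ENNReal.ofReal (t ^ q) = ENNReal.ofReal (-a ^ (q + 1) / (q + 1)) := by
  rw [← ofReal_integral_eq_lintegral_ofReal (integrableOn_Ioi_rpow_of_lt hq ha)
      ((ae_restrict_iff' measurableSet_Ioi).2 (.of_forall fun t ht ↦
        Real.rpow_nonneg (ha.trans ht).le q)),
    integral_Ioi_rpow_of_lt hq ha]

section Tail

variable {X : Type*} [MeasurableSpace X] {μ : Measure X} {ρ : X → ℝ} {α β : ℝ}

theorem ofReal_le_lintegral_rpow_of_le_tail {c t₀ : ℝ} (hρ0 : 0 ≤ᵐ[μ] ρ)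
    (hρ : AEMeasurable ρ μ) (hα : 0 < α) (hαβ : α + β < 0) (hc : 0 ≤ c) (ht₀ : 0 < t₀)
    (hV : ∀ t ≥ t₀, ENNReal.ofReal (c * t ^ β) ≤ μ {x | t < ρ x}) :
    ENNReal.ofReal (α * c * t₀ ^ (α + β) / -(α + β)) ≤
      ∫⁻ x, ENNReal.ofReal (ρ x ^ α) ∂μ := by
  have hpow : ∀ t ∈ Ioi t₀, ENNReal.ofReal c * ENNReal.ofReal (t ^ (α + β - 1))
      ≤ μ {x | t < ρ x} * ENNReal.ofReal (t ^ (α - 1)) := fun t ht ↦ by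
    have ht0 : 0 < t := ht₀.trans ht
    calc ENNReal.ofReal c * ENNReal.ofReal (t ^ (α + β - 1))
        = ENNReal.ofReal (c * t ^ β) * ENNReal.ofReal (t ^ (α - 1)) := by
          rw [← ENNReal.ofReal_mul hc, ← ENNReal.ofReal_mul (by positivity), mul_assoc,
            ← Real.rpow_add ht0]
          ring_nf
      _ ≤ μ {x | t < ρ x} * ENNReal.ofReal (t ^ (α - 1)) := by gcongr; exact hV t ht.le
  calc ENNReal.ofReal (α * c * t₀ ^ (α + β) / -(α + β))
      = ENNReal.ofReal α *
          (ENNReal.ofReal c * ∫⁻ t in Ioi t₀, ENNReal.ofReal (t ^ (α + β - 1))) := by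
        rw [lintegral_ofReal_rpow_Ioi (by linarith) ht₀, ← ENNReal.ofReal_mul hc,
          ← ENNReal.ofReal_mul hα.le, sub_add_cancel, div_neg, neg_div]
        ring_nf
    _ = ENNReal.ofReal α *
          ∫⁻ t in Ioi t₀, ENNReal.ofReal c * ENNReal.ofReal (t ^ (α + β - 1)) := by
        rw [lintegral_const_mul' _ _ ENNReal.ofReal_ne_top]
    _ ≤ ENNReal.ofReal α *
          ∫⁻ t in Ioi t₀, μ {x | t < ρ x} * ENNReal.ofReal (t ^ (α - 1)) :=
        mul_le_mul_right (setLIntegral_mono' measurableSet_Ioi hpow) _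
    _ ≤ ENNReal.ofReal α *
          ∫⁻ t in Ioi 0, μ {x | t < ρ x} * ENNReal.ofReal (t ^ (α - 1)) :=
        mul_le_mul_right (lintegral_mono_set (Ioi_subset_Ioi ht₀.le)) _
    _ = ∫⁻ x, ENNReal.ofReal (ρ x ^ α) ∂μ :=
        (lintegral_rpow_eq_lintegral_meas_lt_mul μ hρ0 hρ hα).symm

theorem lintegral_rpow_lt_top_of_tail_le [IsFiniteMeasure μ] (hρ0 : 0 ≤ᵐ[μ] ρ)
    (hρ : AEMeasurable ρ μ) (hα : 0 < α) (hαβ : α + β < 0)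
    (hV : ∀ᶠ t in atTop, μ {x | t < ρ x} ≤ ENNReal.ofReal (t ^ β)) :
    ∫⁻ x, ENNReal.ofReal (ρ x ^ α) ∂μ < ⊤ := by
  obtain ⟨t₁, ht₁⟩ := (hV.and (eventually_gt_atTop 0)).exists_forall_of_atTop
  have ht₁0 : 0 < t₁ := (ht₁ t₁ le_rfl).2
  set F : ℝ → ℝ≥0∞ := fun t ↦ μ {x | t < ρ x} * ENNReal.ofReal (t ^ (α - 1))
  have hnear : ∫⁻ t in Ioc 0 t₁, F t < ⊤ := by
    have hint : IntegrableOn (fun t : ℝ ↦ t ^ (α - 1)) (Ioc 0 t₁) :=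
      (intervalIntegrable_iff_integrableOn_Ioc_of_le ht₁0.le).1
        (intervalIntegral.intervalIntegrable_rpow' (by linarith))
    calc ∫⁻ t in Ioc 0 t₁, F t
        ≤ ∫⁻ t in Ioc 0 t₁, μ univ * ENNReal.ofReal (t ^ (α - 1)) :=
          lintegral_mono fun t ↦ mul_le_mul_left (measure_mono (subset_univ _)) _
      _ = μ univ * ∫⁻ t in Ioc 0 t₁, ENNReal.ofReal (t ^ (α - 1)) :=
          lintegral_const_mul' _ _ (measure_ne_top μ univ)
      _ < ⊤ := ENNReal.mul_lt_top (measure_lt_top μ univ) hint.lintegral_lt_top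
  have hfar : ∫⁻ t in Ioi t₁, F t < ⊤ := by
    calc ∫⁻ t in Ioi t₁, F t ≤ ∫⁻ t in Ioi t₁, ENNReal.ofReal (t ^ (α + β - 1)) := by
          refine setLIntegral_mono' measurableSet_Ioi fun t ht ↦ ?_
          have ht0 : 0 < t := ht₁0.trans ht
          calc F t ≤ ENNReal.ofReal (t ^ β) * ENNReal.ofReal (t ^ (α - 1)) :=
                mul_le_mul_left (ht₁ t ht.le).1 _
            _ = ENNReal.ofReal (t ^ (α + β - 1)) := by
                rw [← ENNReal.ofReal_mul (by positivity), ← Real.rpow_add ht0]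
                ring_nf
      _ < ⊤ := by
        rw [lintegral_ofReal_rpow_Ioi (by linarith) ht₁0]
        exact ENNReal.ofReal_lt_top
  rw [lintegral_rpow_eq_lintegral_meas_lt_mul μ hρ0 hρ hα]
  refine ENNReal.mul_lt_top ENNReal.ofReal_lt_top ?_
  calc ∫⁻ t in Ioi 0, F t ≤ ∫⁻ t in Ioc 0 t₁ ∪ Ioi t₁, F t :=
        lintegral_mono_set Ioi_subset_Ioc_union_Ioi
    _ ≤ (∫⁻ t in Ioc 0 t₁, F t) + ∫⁻ t in Ioi t₁, F t := lintegral_union_le _ _ _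
    _ < ⊤ := ENNReal.add_lt_top.2 ⟨hnear, hfar⟩

theorem le_integral_rpow_of_tail_bounds [IsFiniteMeasure μ] {β' c t₀ : ℝ}
    (hρ0 : 0 ≤ᵐ[μ] ρ) (hρ : AEMeasurable ρ μ) (hα : 0 < α) (hαβ : α + β < 0)
    (hαβ' : α + β' < 0) (hc : 0 ≤ c) (ht₀ : 0 < t₀)
    (hlow : ∀ t ≥ t₀, ENNReal.ofReal (c * t ^ β) ≤ μ {x | t < ρ x})
    (hup : ∀ᶠ t in atTop, μ {x | t < ρ x} ≤ ENNReal.ofReal (t ^ β')) :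
    α * c * t₀ ^ (α + β) / -(α + β) ≤ ∫ x, ρ x ^ α ∂μ := by
  rw [integral_eq_lintegral_of_nonneg_ae (hρ0.mono fun x hx ↦ Real.rpow_nonneg hx α)
    (hρ.pow_const α).aestronglyMeasurable]
  exact (ENNReal.ofReal_le_iff_le_toReal
    (lintegral_rpow_lt_top_of_tail_le hρ0 hρ hα hαβ' hup).ne).1
    (ofReal_le_lintegral_rpow_of_le_tail hρ0 hρ hα hαβ hc ht₀ hlow)

theorem restrict_setOf_lt_apply_setOf_lt (hρ : Measurable ρ) (Ω : Set X) {T t : ℝ}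
    (hTt : T ≤ t) : μ.restrict {x ∈ Ω | T < ρ x} {x | t < ρ x} = μ {x ∈ Ω | t < ρ x} := by
  rw [Measure.restrict_apply (measurableSet_lt measurable_const hρ)]
  congr 1
  ext x
  simp only [mem_inter_iff, mem_ofPred_eq]
  exact ⟨fun h ↦ ⟨h.2.1, h.1⟩, fun h ↦ ⟨h.2, h.1, hTt.trans_lt h.2⟩⟩

end Tail

section Growth

variable {f : ℝ → ℝ≥0∞} {β : ℝ}

theorem exists_pos_eventually_ofReal_mul_rpow_le
    (h : 0 < liminf (fun t ↦ f t / ENNReal.ofReal (t ^ β)) atTop) :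
    ∃ c > 0, ∀ᶠ t in atTop, ENNReal.ofReal (c * t ^ β) ≤ f t := by
  obtain ⟨c, hc0, hc⟩ := exists_between h
  have hc_top : c ≠ ⊤ := (hc.trans_le le_top).ne
  refine ⟨c.toReal, ENNReal.toReal_pos hc0.ne' hc_top, ?_⟩
  filter_upwards [eventually_lt_of_lt_liminf hc, eventually_gt_atTop 0] with t ht ht0
  rw [ENNReal.ofReal_mul ENNReal.toReal_nonneg, ENNReal.ofReal_toReal hc_top]
  exact ((ENNReal.lt_div_iff_mul_lt (.inl (by positivity)) (.inl ENNReal.ofReal_ne_top)).1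
    ht).le

theorem eventually_le_ofReal_rpow_of_limsup_eq_zero
    (h : limsup (fun t ↦ f t / ENNReal.ofReal (t ^ β)) atTop = 0) :
    ∀ᶠ t in atTop, f t ≤ ENNReal.ofReal (t ^ β) := by
  filter_upwards [eventually_lt_of_limsup_lt (h.trans_lt zero_lt_one), eventually_gt_atTop 0]
    with t ht ht0
  simpa using ((ENNReal.div_lt_iff (.inl (by positivity)) (.inl ENNReal.ofReal_ne_top)).1 ht).le

end Growth

theorem tendsto_div_sub_nhdsGT_atTop {g : ℝ → ℝ} {D a : ℝ} (ha : 0 < a)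
    (hg : Tendsto g (𝓝[>] D) (𝓝 a)) : Tendsto (fun s ↦ g s / (s - D)) (𝓝[>] D) atTop := by
  have hsub := (map_subRight_nhdsGT (c := D) (a := D)).le
  rw [sub_self] at hsub
  simpa only [div_eq_mul_inv, Function.comp_def] using
    hg.pos_mul_atTop ha (tendsto_inv_nhdsGT_zero.comp hsub)

theorem stmt_13_general (N : ℕ)
    (Ω : Set (EuclideanSpace ℝ (Fin N)))
    (hfin : volume Ω < ⊤)
    (T : ℝ) (D : ℝ) (hDN : D < -(N : ℝ))
    (hlow : 0 < liminf (fun t : ℝ =>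
        volume {x ∈ Ω | t < ‖x‖} / ENNReal.ofReal (t ^ ((N : ℝ) + D))) atTop)
    (hup : ∀ r : ℝ, D < r →
      limsup (fun t : ℝ =>
        volume {x ∈ Ω | t < ‖x‖} / ENNReal.ofReal (t ^ ((N : ℝ) + r))) atTop = 0) :
    Tendsto (fun s : ℝ => ∫ x in {x ∈ Ω | T < ‖x‖}, ‖x‖ ^ (-s - (N : ℝ)))
      (𝓝[>] D) atTop := by
  set S := {x ∈ Ω | T < ‖x‖}
  have : IsFiniteMeasure (volume.restrict S) :=
    isFiniteMeasure_restrict.2 ((measure_mono (sep_subset Ω _)).trans_lt hfin).ne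
  have htail : ∀ t ≥ T, volume.restrict S {x | t < ‖x‖} = volume {x ∈ Ω | t < ‖x‖} :=
    fun t ↦ restrict_setOf_lt_apply_setOf_lt measurable_norm Ω
  obtain ⟨c, hc, hlow⟩ := exists_pos_eventually_ofReal_mul_rpow_le hlow
  obtain ⟨t₀, ht₀⟩ := (hlow.and (eventually_ge_atTop (max T 1))).exists_forall_of_atTop
  have ht₀0 : 0 < t₀ := one_pos.trans_le ((le_max_right _ _).trans (ht₀ t₀ le_rfl).2)
  have hlowS : ∀ t ≥ t₀,
      ENNReal.ofReal (c * t ^ ((N : ℝ) + D)) ≤ volume.restrict S {x | t < ‖x‖} :=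
    fun t ht ↦ (htail t ((le_max_left _ _).trans (ht₀ t ht).2)).symm ▸ (ht₀ t ht).1
  have key : ∀ s ∈ Ioo D (-(N : ℝ)),
      (-s - N) * c * t₀ ^ (D - s) / (s - D) ≤ ∫ x in S, ‖x‖ ^ (-s - (N : ℝ)) := by
    rintro s ⟨hDs, hsN⟩
    have hupS : ∀ᶠ t in atTop,
        volume.restrict S {x | t < ‖x‖} ≤ ENNReal.ofReal (t ^ ((N : ℝ) + (D + s) / 2)) := by
      filter_upwards [eventually_le_ofReal_rpow_of_limsup_eq_zero
        (hup ((D + s) / 2) (by linarith)), eventually_ge_atTop T] with t ht hTt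
      rwa [htail t hTt]
    have := le_integral_rpow_of_tail_bounds (α := -s - N) (.of_forall fun x ↦ norm_nonneg x)
      measurable_norm.aemeasurable (by linarith) (by linarith) (by linarith) hc.le ht₀0 hlowS
      hupS
    rwa [show -s - N + (N + D) = D - s by ring, neg_sub] at this
  have hlim : Tendsto (fun s ↦ (-s - N) * c * t₀ ^ (D - s) / (s - D)) (𝓝[>] D) atTop := by
    refine tendsto_div_sub_nhdsGT_atTop (a := (-D - N) * c * t₀ ^ (D - D)) ?_ ?_
    · rw [sub_self, Real.rpow_zero, mul_one]
      exact mul_pos (by linarith) hc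
    · exact (Continuous.tendsto (by fun_prop (disch := positivity)) D).mono_left
        nhdsWithin_le_nhds
  exact tendsto_atTop_mono' _ (eventually_of_mem (Ioo_mem_nhdsGT hDN) key) hlim

/-- For measurable `Ω ⊆ ℝ^N` with `|Ω| < ∞`, `T > 0`, and `D < -N` such that
the lower `D`-dimensional Minkowski content of `Ω` at infinity is positive and the upper
`r`-dimensional content vanishes for every `r > D` (so `D = dim_B(∞,Ω)`), the Lapidus zeta
function at infinity `ζ_{∞,Ω}(s) = ∫_{{x∈Ω:|x|>T}} |x|^{-s-N} dx` tends to `+∞` as the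
real variable `s` tends to `D` from the right. -/
theorem stmt_13 (N : ℕ) (hN : 1 ≤ N)
    (Ω : Set (EuclideanSpace ℝ (Fin N)))
    (hΩ : MeasurableSet Ω) (hfin : volume Ω < ⊤)
    (T : ℝ) (hT : 0 < T) (D : ℝ) (hDN : D < -(N : ℝ))
    (hlow : 0 < liminf (fun t : ℝ =>
        volume {x ∈ Ω | t < ‖x‖} / ENNReal.ofReal (t ^ ((N : ℝ) + D))) atTop)
    (hup : ∀ r : ℝ, D < r →
      limsup (fun t : ℝ =>
        volume {x ∈ Ω | t < ‖x‖} / ENNReal.ofReal (t ^ ((N : ℝ) + r))) atTop = 0) :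
    Tendsto (fun s : ℝ => ∫ x in {x ∈ Ω | T < ‖x‖}, ‖x‖ ^ (-s - (N : ℝ)))
      (𝓝[>] D) atTop :=
  stmt_13_general N Ω hfin T D hDN hlow hup
end

section
/- Let N ≥ 1, let Ω ⊆ ℝ^N be Lebesgue measurable with |Ω| < ∞, let T > 0, and let D ∈ ℝ with D < -N. Assume Ω is Minkowski measurable at infinity with dimension D and content M ∈ (0,∞), i.e., V_Ω(t)/t^{N+D} → M as t → +∞. Then, with ζ_{∞,Ω}(s) := ∫_{{x ∈ Ω : |x| > T}} |x|^{-s-N} dx for real s > D, one has (s-D)·ζ_{∞,Ω}(s) → -(N+D)·M as s → D⁺. (In particular, if ζ_{∞,Ω} admits a meromorphic continuation to a neighborhood of D, then its residue at the simple pole D equals -(N+D)·M^D(∞,Ω).) -/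
/-!
By the layer-cake formula, for `p = -s - N > 0` the zeta integral is a one-dimensional integral of
the tail volume `V(t) = |{x ∈ Ω : |x| > t}|`:
`ζ(s) = V(T) T^p + p ∫_T^∞ V(t) t^(p-1) dt`.
Writing `V(t) = g(t) t^(N+D)` with `g(t) → M`, the last integral is `∫_T^∞ g(t) t^(-1-r) dt` with
`r = s - D`. This is an Abelian limit: `r ∫_T^∞ t^(-1-r) dt = T^(-r) → 1`, while on any bounded
range `[T, b]` the factor `r` kills the integral, so `r ∫_T^∞ g(t) t^(-1-r) dt → lim g = M`.
Hence `(s - D) ζ(s) → (-N - D) M`.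
-/

open MeasureTheory Filter Set
open scoped Topology ENNReal

lemma integral_Ioi_rpow_neg_one_sub {b r : ℝ} (hb : 0 < b) (hr : 0 < r) :
    ∫ t in Ioi b, t ^ (-1 - r) = b ^ (-r) / r := by
  rw [integral_Ioi_rpow_of_lt (by linarith) hb, show -1 - r + 1 = -r by ring, neg_div_neg_eq]

section Abelian

variable {g : ℝ → ℝ} {T : ℝ}

lemma integrableOn_Ioi_mul_rpow_neg_one_sub {C r : ℝ} (hT : 0 < T) (hr : 0 < r)
    (hg : LocallyIntegrableOn g (Ici T)) (hbdd : ∀ᶠ t in atTop, ‖g t‖ ≤ C) :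
    IntegrableOn (fun t => g t * t ^ (-1 - r)) (Ioi T) := by
  obtain ⟨b, hb⟩ := eventually_atTop.1 hbdd
  have hTb : T ≤ max b T := le_max_right b T
  have hcont : ContinuousOn (fun t : ℝ => t ^ (-1 - r)) (Ici T) := fun t ht =>
    (Real.continuousAt_rpow_const _ _ (Or.inl (hT.trans_le ht).ne')).continuousWithinAt
  rw [← Ioc_union_Ioi_eq_Ioi hTb]
  refine IntegrableOn.union ?_ ?_
  · exact ((hg.integrableOn_compact_subset Icc_subset_Ici_self isCompact_Icc).mul_continuousOn
      (hcont.mono Icc_subset_Ici_self) isCompact_Icc).mono_set Ioc_subset_Icc_self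
  · refine Integrable.mono' ((integrableOn_Ioi_rpow_of_lt (a := -1 - r) (by linarith)
      (hT.trans_le hTb)).const_mul C)
      (((hg.mul_continuousOn hcont isClosed_Ici.isLocallyClosed).aestronglyMeasurable).mono_set
        (Ioi_subset_Ici hTb)) ?_
    filter_upwards [ae_restrict_mem measurableSet_Ioi] with t ht
    have ht0 : 0 < t := hT.trans_le (hTb.trans ht.le)
    rw [norm_mul, Real.norm_of_nonneg (Real.rpow_nonneg ht0.le _)]
    exact mul_le_mul_of_nonneg_right (hb t ((le_max_left b T).trans ht.le))
      (Real.rpow_nonneg ht0.le _)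

lemma norm_mul_integral_Ioi_mul_rpow_le {b η r : ℝ} (hT : 0 < T) (hTb : T ≤ b)
    (hb : 1 ≤ b) (hr : 0 < r) (hg : LocallyIntegrableOn g (Ici T)) (hη : ∀ t ≥ b, ‖g t‖ ≤ η) :
    ‖r * ∫ t in Ioi T, g t * t ^ (-1 - r)‖ ≤
      η + r * T ^ (-1 - r) * ∫ t in Ioc T b, ‖g t‖ := by
  have hint := integrableOn_Ioi_mul_rpow_neg_one_sub hT hr hg
    (eventually_atTop.2 ⟨b, hη⟩)
  have hgIoc : IntegrableOn g (Ioc T b) :=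
    (hg.integrableOn_compact_subset Icc_subset_Ici_self isCompact_Icc).mono_set Ioc_subset_Icc_self
  have hhead : ‖∫ t in Ioc T b, g t * t ^ (-1 - r)‖ ≤ (∫ t in Ioc T b, ‖g t‖) * T ^ (-1 - r) := by
    rw [← integral_mul_const]
    refine norm_integral_le_of_norm_le (hgIoc.norm.mul_const _) ?_
    filter_upwards [ae_restrict_mem measurableSet_Ioc] with t ht
    have ht0 : 0 < t := hT.trans ht.1
    rw [norm_mul, Real.norm_of_nonneg (Real.rpow_nonneg ht0.le _)]
    exact mul_le_mul_of_nonneg_left (Real.rpow_le_rpow_of_nonpos hT ht.1.le (by linarith))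
      (norm_nonneg _)
  have htail : ‖∫ t in Ioi b, g t * t ^ (-1 - r)‖ ≤ η * (b ^ (-r) / r) := by
    rw [← integral_Ioi_rpow_neg_one_sub (by linarith) hr, ← integral_const_mul]
    refine norm_integral_le_of_norm_le ((integrableOn_Ioi_rpow_of_lt (by linarith)
      (by linarith)).const_mul η) ?_
    filter_upwards [ae_restrict_mem measurableSet_Ioi] with t ht
    have ht0 : 0 < t := by linarith [mem_Ioi.1 ht]
    rw [norm_mul, Real.norm_of_nonneg (Real.rpow_nonneg ht0.le _)]
    exact mul_le_mul_of_nonneg_right (hη t (le_of_lt ht)) (Real.rpow_nonneg ht0.le _)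
  have hbr : b ^ (-r) ≤ 1 := Real.rpow_le_one_of_one_le_of_nonpos hb (by linarith)
  have hη0 : 0 ≤ η := (norm_nonneg _).trans (hη b le_rfl)
  rw [← Ioc_union_Ioi_eq_Ioi hTb, setIntegral_union (Ioc_disjoint_Ioi le_rfl) measurableSet_Ioi
    (hint.mono_set Ioc_subset_Ioi_self) (hint.mono_set (Ioi_subset_Ioi hTb)), mul_add]
  calc ‖(r * ∫ t in Ioc T b, g t * t ^ (-1 - r)) + r * ∫ t in Ioi b, g t * t ^ (-1 - r)‖
      ≤ r * ‖∫ t in Ioc T b, g t * t ^ (-1 - r)‖ + r * ‖∫ t in Ioi b, g t * t ^ (-1 - r)‖ := by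
        refine (norm_add_le _ _).trans_eq ?_
        rw [norm_mul, norm_mul, Real.norm_of_nonneg hr.le]
    _ ≤ r * ((∫ t in Ioc T b, ‖g t‖) * T ^ (-1 - r)) + r * (η * (b ^ (-r) / r)) := by gcongr
    _ = η * b ^ (-r) + r * T ^ (-1 - r) * ∫ t in Ioc T b, ‖g t‖ := by field_simp; ring
    _ ≤ η + r * T ^ (-1 - r) * ∫ t in Ioc T b, ‖g t‖ := by
        linarith [mul_le_of_le_one_right hη0 hbr]

lemma tendsto_mul_integral_Ioi_mul_rpow_of_tendsto_zero (hT : 0 < T)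
    (hg : LocallyIntegrableOn g (Ici T)) (hlim : Tendsto g atTop (𝓝 0)) :
    Tendsto (fun r => r * ∫ t in Ioi T, g t * t ^ (-1 - r)) (𝓝[>] 0) (𝓝 0) := by
  rw [Metric.tendsto_nhds]
  intro ε hε
  obtain ⟨b, hb⟩ := eventually_atTop.1
    (((tendsto_zero_iff_norm_tendsto_zero.1 hlim).eventually (ge_mem_nhds (half_pos hε))).and
      (eventually_ge_atTop (max T 1)))
  have hhead : Tendsto (fun r => r * T ^ (-1 - r) * ∫ t in Ioc T b, ‖g t‖) (𝓝[>] 0) (𝓝 0) := by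
    have hcont : Continuous fun r : ℝ => r * T ^ (-1 - r) * ∫ t in Ioc T b, ‖g t‖ := by
      fun_prop (disch := exact hT.ne')
    simpa using (hcont.tendsto 0).mono_left nhdsWithin_le_nhds
  filter_upwards [hhead.eventually (gt_mem_nhds (half_pos hε)), self_mem_nhdsWithin]
    with r hr hr0
  have hbound := norm_mul_integral_Ioi_mul_rpow_le hT ((le_max_left T 1).trans (hb b le_rfl).2)
    ((le_max_right T 1).trans (hb b le_rfl).2) hr0 hg (fun t ht => (hb t ht).1)
  rw [dist_zero_right]
  linarith

theorem tendsto_mul_integral_Ioi_mul_rpow {M : ℝ} (hT : 0 < T)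
    (hg : LocallyIntegrableOn g (Ici T)) (hlim : Tendsto g atTop (𝓝 M)) :
    Tendsto (fun r => r * ∫ t in Ioi T, g t * t ^ (-1 - r)) (𝓝[>] 0) (𝓝 M) := by
  have hsub := tendsto_mul_integral_Ioi_mul_rpow_of_tendsto_zero hT
    (g := fun t => g t - M) (hg.sub (locallyIntegrableOn_const M))
    (by simpa using hlim.sub_const M)
  have hpow : Tendsto (fun r : ℝ => T ^ (-r)) (𝓝[>] 0) (𝓝 1) := by
    have hcont : Continuous fun r : ℝ => T ^ (-r) := by fun_prop (disch := exact hT.ne')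
    simpa using (hcont.tendsto 0).mono_left nhdsWithin_le_nhds
  have hsplit : ∀ r > 0, r * ∫ t in Ioi T, g t * t ^ (-1 - r) =
      r * (∫ t in Ioi T, (g t - M) * t ^ (-1 - r)) + M * T ^ (-r) := by
    intro r hr
    have hint := integrableOn_Ioi_mul_rpow_neg_one_sub hT hr hg
      ((hlim.norm.eventually (gt_mem_nhds (lt_add_one ‖M‖))).mono fun _ h => h.le)
    simp_rw [sub_mul]
    rw [integral_sub hint ((integrableOn_Ioi_rpow_of_lt (by linarith) hT).const_mul M),
      integral_const_mul, integral_Ioi_rpow_neg_one_sub hT hr]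
    field_simp
    ring
  refine Tendsto.congr' (eventually_nhdsWithin_of_forall fun r hr => (hsplit r hr).symm) ?_
  simpa using hsub.add (hpow.const_mul M)

end Abelian

section LayerCake

variable {α : Type*} [MeasurableSpace α] (μ : Measure α) {f : α → ℝ} {T p : ℝ}

lemma integral_mul_rpow_sub_one_eq_rpow (hp : 0 < p) (u : ℝ) :
    ∫ t in (0)..u, p * t ^ (p - 1) = u ^ p := by
  rw [intervalIntegral.integral_const_mul, integral_rpow (Or.inl (by linarith)), sub_add_cancel,
    Real.zero_rpow hp.ne', sub_zero, mul_div_cancel₀ _ hp.ne']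

lemma setLIntegral_rpow_of_lt (hf : Measurable f) (hT : 0 ≤ T) (hp : 0 < p) :
    ∫⁻ x in {x | T < f x}, ENNReal.ofReal (f x ^ p) ∂μ =
      μ {x | T < f x} * ENNReal.ofReal (T ^ p) +
        ∫⁻ t in Ioi T, μ {x | t < f x} * ENNReal.ofReal (p * t ^ (p - 1)) := by
  set A := {x | T < f x}
  have hA : MeasurableSet A := measurableSet_lt measurable_const hf
  have hlayer := lintegral_comp_eq_lintegral_meas_lt_mul (μ.restrict A)
    (g := fun t => p * t ^ (p - 1))
    (by filter_upwards [ae_restrict_mem hA] with x hx using hT.trans hx.le) hf.aemeasurable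
    (fun t _ => (intervalIntegral.intervalIntegrable_rpow' (by linarith)).const_mul p)
    (by filter_upwards [ae_restrict_mem measurableSet_Ioi] with t ht
        using mul_nonneg hp.le (Real.rpow_nonneg (le_of_lt ht) _))
  have hlower : ∀ t ∈ Ioc 0 T, μ.restrict A {x | t < f x} = μ A := fun t ht => by
    rw [Measure.restrict_apply (measurableSet_lt measurable_const hf),
      inter_eq_self_of_subset_right (show A ⊆ {x | t < f x} from fun x hx => ht.2.trans_lt hx)]
  have hupper : ∀ t ∈ Ioi T, μ.restrict A {x | t < f x} = μ {x | t < f x} := fun t ht => by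
    rw [Measure.restrict_apply (measurableSet_lt measurable_const hf),
      inter_eq_self_of_subset_left
        (show {x | t < f x} ⊆ A from fun x hx => show T < f x from lt_trans ht hx)]
  have hprim : ∫⁻ t in Ioc 0 T, ENNReal.ofReal (p * t ^ (p - 1)) = ENNReal.ofReal (T ^ p) := by
    rw [← ofReal_integral_eq_lintegral_ofReal, ← intervalIntegral.integral_of_le hT,
      integral_mul_rpow_sub_one_eq_rpow hp T]
    · exact ((intervalIntegral.intervalIntegrable_rpow' (by linarith)).const_mul p).1
    · filter_upwards [ae_restrict_mem measurableSet_Ioc] with t ht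
        using mul_nonneg hp.le (Real.rpow_nonneg ht.1.le _)
  rw [← Ioc_union_Ioi_eq_Ioi hT, lintegral_union measurableSet_Ioi (Ioc_disjoint_Ioi le_rfl),
    setLIntegral_congr_fun measurableSet_Ioc fun t ht => by rw [hlower t ht],
    setLIntegral_congr_fun measurableSet_Ioi fun t ht => by rw [hupper t ht],
    lintegral_const_mul _ (by fun_prop), hprim] at hlayer
  rw [← hlayer]
  exact setLIntegral_congr_fun hA fun x hx => by
    rw [integral_mul_rpow_sub_one_eq_rpow hp (f x)]

lemma setIntegral_rpow_of_lt (hf : Measurable f) (hT : 0 ≤ T) (hp : 0 < p)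
    (hfin : μ {x | T < f x} ≠ ∞)
    (hint : IntegrableOn (fun t => μ.real {x | t < f x} * t ^ (p - 1)) (Ioi T)) :
    ∫ x in {x | T < f x}, f x ^ p ∂μ =
      μ.real {x | T < f x} * T ^ p + p * ∫ t in Ioi T, μ.real {x | t < f x} * t ^ (p - 1) := by
  have hA : MeasurableSet {x | T < f x} := measurableSet_lt measurable_const hf
  have hfin' : ∀ t ∈ Ioi T, μ {x | t < f x} ≠ ∞ := fun t ht =>
    ne_top_of_le_ne_top hfin (measure_mono (show {x | t < f x} ⊆ {x | T < f x} from
      fun x hx => show T < f x from lt_trans ht hx))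
  have htail : ∫⁻ t in Ioi T, μ {x | t < f x} * ENNReal.ofReal (p * t ^ (p - 1)) =
      ENNReal.ofReal (p * ∫ t in Ioi T, μ.real {x | t < f x} * t ^ (p - 1)) := by
    rw [← integral_const_mul, ofReal_integral_eq_lintegral_ofReal (hint.const_mul p)]
    · refine setLIntegral_congr_fun measurableSet_Ioi fun t ht => ?_
      rw [← ENNReal.ofReal_toReal (hfin' t ht), ← ENNReal.ofReal_mul ENNReal.toReal_nonneg,
        measureReal_def, mul_left_comm]
    · filter_upwards [ae_restrict_mem measurableSet_Ioi] with t ht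
      exact mul_nonneg hp.le (mul_nonneg measureReal_nonneg
        (Real.rpow_nonneg (hT.trans (le_of_lt ht)) _))
  have hnonneg : 0 ≤ p * ∫ t in Ioi T, μ.real {x | t < f x} * t ^ (p - 1) :=
    mul_nonneg hp.le (setIntegral_nonneg measurableSet_Ioi fun t ht =>
      mul_nonneg measureReal_nonneg (Real.rpow_nonneg (hT.trans (le_of_lt ht)) _))
  rw [integral_eq_lintegral_of_nonneg_ae
      (by filter_upwards [ae_restrict_mem hA] with x hx using
        Real.rpow_nonneg (hT.trans hx.le) _)
      (hf.pow_const p).aestronglyMeasurable,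
    setLIntegral_rpow_of_lt μ hf hT hp, htail,
    ENNReal.toReal_add (ENNReal.mul_ne_top hfin ENNReal.ofReal_ne_top) ENNReal.ofReal_ne_top,
    ENNReal.toReal_mul, ENNReal.toReal_ofReal (Real.rpow_nonneg hT _),
    ENNReal.toReal_ofReal hnonneg, measureReal_def]

lemma setIntegral_sep_rpow_of_lt (s : Set α) (hf : Measurable f) (hT : 0 ≤ T) (hp : 0 < p)
    (hfin : μ {x ∈ s | T < f x} ≠ ∞)
    (hint : IntegrableOn (fun t => μ.real {x ∈ s | t < f x} * t ^ (p - 1)) (Ioi T)) :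
    ∫ x in {x ∈ s | T < f x}, f x ^ p ∂μ =
      μ.real {x ∈ s | T < f x} * T ^ p +
        p * ∫ t in Ioi T, μ.real {x ∈ s | t < f x} * t ^ (p - 1) := by
  have hsep : ∀ t, μ.restrict s {x | t < f x} = μ {x ∈ s | t < f x} := fun t => by
    rw [Measure.restrict_apply (measurableSet_lt measurable_const hf), inter_comm]
    rfl
  have hrestr : μ.restrict {x ∈ s | T < f x} = (μ.restrict s).restrict {x | T < f x} := by
    rw [Measure.restrict_restrict (measurableSet_lt measurable_const hf), inter_comm]
    rfl
  simp only [measureReal_def, ← hsep] at hint ⊢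
  rw [hrestr]
  exact setIntegral_rpow_of_lt _ hf hT hp (hsep T ▸ hfin) hint

end LayerCake

lemma antitone_measureReal_sep_lt {α : Type*} [MeasurableSpace α] {μ : Measure α} {s : Set α}
    (hs : μ s ≠ ∞) (f : α → ℝ) : Antitone fun t => μ.real {x ∈ s | t < f x} :=
  fun _ _ htt' => measureReal_mono (fun _ hx => ⟨hx.1, htt'.trans_lt hx.2⟩)
    (measure_ne_top_of_subset (sep_subset _ _) hs)

lemma Antitone.locallyIntegrableOn_div_rpow {V : ℝ → ℝ} (hV : Antitone V) {T : ℝ} (hT : 0 < T)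
    (a : ℝ) : LocallyIntegrableOn (fun t => V t / t ^ a) (Ici T) := by
  have hinv : ContinuousOn (fun t : ℝ => (t ^ a)⁻¹) (Ici T) := fun t ht =>
    ((Real.continuousAt_rpow_const _ _ (Or.inl (hT.trans_le ht).ne')).inv₀
      (Real.rpow_pos_of_pos (hT.trans_le ht) _).ne').continuousWithinAt
  simpa only [div_eq_mul_inv] using
    (hV.locallyIntegrable.locallyIntegrableOn _).mul_continuousOn hinv isClosed_Ici.isLocallyClosed

theorem stmt_15_general (N : ℕ)
    (Ω : Set (EuclideanSpace ℝ (Fin N)))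
    (hfin : volume Ω < ⊤)
    (T : ℝ) (hT : 0 < T) (D : ℝ) (hDN : D < -(N : ℝ))
    (M : ℝ)
    (hmink : Tendsto (fun t : ℝ =>
        (volume {x ∈ Ω | t < ‖x‖}).toReal / t ^ ((N : ℝ) + D)) atTop (𝓝 M)) :
    Tendsto (fun s : ℝ =>
        (s - D) * ∫ x in {x ∈ Ω | T < ‖x‖}, ‖x‖ ^ (-s - (N : ℝ)))
      (𝓝[>] D) (𝓝 (-((N : ℝ) + D) * M)) := by
  set V : ℝ → ℝ := fun t => volume.real {x ∈ Ω | t < ‖x‖}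
  set g : ℝ → ℝ := fun t => V t / t ^ ((N : ℝ) + D)
  have hg : LocallyIntegrableOn g (Ici T) :=
    (antitone_measureReal_sep_lt hfin.ne _).locallyIntegrableOn_div_rpow hT _
  have hVg : ∀ s, ∀ t ∈ Ioi T, V t * t ^ (-s - (N : ℝ) - 1) = g t * t ^ (-1 - (s - D)) :=
    fun s t ht => by
      rw [div_mul_eq_mul_div, mul_div_assoc, ← Real.rpow_sub (hT.trans ht)]
      ring_nf
  have hzeta : ∀ s ∈ Ioo D (-(N : ℝ)), ∫ x in {x ∈ Ω | T < ‖x‖}, ‖x‖ ^ (-s - (N : ℝ)) =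
      V T * T ^ (-s - (N : ℝ)) + (-s - N) * ∫ t in Ioi T, g t * t ^ (-1 - (s - D)) := by
    intro s hs
    have hint : IntegrableOn (fun t => g t * t ^ (-1 - (s - D))) (Ioi T) :=
      integrableOn_Ioi_mul_rpow_neg_one_sub hT (sub_pos.2 hs.1) hg
        ((hmink.norm.eventually (gt_mem_nhds (lt_add_one ‖M‖))).mono fun _ h => h.le)
    rw [setIntegral_sep_rpow_of_lt _ _ measurable_norm hT.le (by linarith [hs.2])
        (measure_ne_top_of_subset (sep_subset _ _) hfin.ne)
        (hint.congr_fun (fun t ht => (hVg s t ht).symm) measurableSet_Ioi),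
      setIntegral_congr_fun measurableSet_Ioi (hVg s)]
  have habel := (tendsto_mul_integral_Ioi_mul_rpow hT hg hmink).comp
    ((map_subRight_nhdsGT (c := D) (a := D)).le.trans_eq (by rw [sub_self]))
  have hhead : Tendsto (fun s : ℝ => (s - D) * (V T * T ^ (-s - (N : ℝ)))) (𝓝[>] D) (𝓝 0) := by
    have hcont : Continuous fun s : ℝ => (s - D) * (V T * T ^ (-s - (N : ℝ))) := by
      fun_prop (disch := exact hT.ne')
    simpa using (hcont.tendsto D).mono_left nhdsWithin_le_nhds
  have hexp : Tendsto (fun s : ℝ => -s - (N : ℝ)) (𝓝[>] D) (𝓝 (-((N : ℝ) + D))) :=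
    ((by fun_prop : Continuous fun s : ℝ => -s - (N : ℝ)).tendsto' D _ (by ring)).mono_left
      nhdsWithin_le_nhds
  have hlim := hhead.add (hexp.mul habel)
  rw [zero_add] at hlim
  refine hlim.congr' ?_
  filter_upwards [Ioo_mem_nhdsGT hDN] with s hs
  rw [hzeta s hs, Function.comp_apply]
  ring

/-- For measurable `Ω ⊆ ℝ^N` with `|Ω| < ∞`, `T > 0`, and `D < -N`, if `Ω`
is Minkowski measurable at infinity with dimension `D` and content `M ∈ (0,∞)`, i.e.
`V_Ω(t)/t^{N+D} → M` as `t → +∞`, then with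
`ζ_{∞,Ω}(s) = ∫_{{x∈Ω:|x|>T}} |x|^{-s-N} dx` for real `s > D` one has
`(s-D)·ζ_{∞,Ω}(s) → -(N+D)·M` as `s → D⁺`. -/
theorem stmt_15 (N : ℕ) (hN : 1 ≤ N)
    (Ω : Set (EuclideanSpace ℝ (Fin N)))
    (hΩ : MeasurableSet Ω) (hfin : volume Ω < ⊤)
    (T : ℝ) (hT : 0 < T) (D : ℝ) (hDN : D < -(N : ℝ))
    (M : ℝ) (hM : 0 < M)
    (hmink : Tendsto (fun t : ℝ =>
        (volume {x ∈ Ω | t < ‖x‖}).toReal / t ^ ((N : ℝ) + D)) atTop (𝓝 M)) :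
    Tendsto (fun s : ℝ =>
        (s - D) * ∫ x in {x ∈ Ω | T < ‖x‖}, ‖x‖ ^ (-s - (N : ℝ)))
      (𝓝[>] D) (𝓝 (-((N : ℝ) + D) * M)) :=
  stmt_15_general N Ω hfin T hT D hDN M hmink
end

section
/- Let α > 0, β > 1 and Ω(α,β) := ⋃_{j=1}^∞ (j^α, j^α + j^{-β}) ⊆ ℝ. Let j₀ ≥ 1 be an integer such that j^α + j^{-β} ≤ (j+1)^α for all j ≥ j₀ and j^α + j^{-β} ≤ j₀^α for all 1 ≤ j < j₀, and set T := j₀^α. Then for every s ∈ ℂ with Re s > (1-(α+β))/α and s ≠ 0, ∫_{Ω(α,β) ∩ (T,∞)} x^{-s-1} dx = (1/s)·Σ_{j=j₀}^∞ ( (j^α)^{-s} - (j^α + j^{-β})^{-s} ), where the series converges absolutely; here c^w denotes the complex power of the positive real c. -/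
/-!
For `k ≥ j₀` let `I_k = (k^α, k^α + k^{-β})`. Hypothesis `h₂` says that the intervals with
`k < j₀` lie below `T = j₀^α`, so `Ω ∩ (T, ∞)` is the union of the `I_k` with `k ≥ j₀`, and `h₁`
makes these pairwise disjoint. Since `I_k ⊆ [k^α, (2k)^α]` and `|I_k| = k^{-β}`, the integral of
`|x^{-s-1}|` over `I_k` is `O(k^{-α(Re s + 1) - β})`, a convergent `p`-series exactly when
`Re s > (1 - (α + β))/α`. So `x^{-s-1}` is integrable on the union, and by countable additivity
its integral is the sum of the elementary integrals
`∫_{I_k} x^{-s-1} dx = ((k^α)^{-s} - (k^α + k^{-β})^{-s})/s`.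
-/

open MeasureTheory Set Function

theorem Real.rpow_le_max_of_mem_Icc {a b x : ℝ} (r : ℝ) (ha : 0 < a) (hx : x ∈ Icc a b) :
    x ^ r ≤ max (a ^ r) (b ^ r) := by
  rcases le_total 0 r with hr | hr
  · exact (Real.rpow_le_rpow (ha.le.trans hx.1) hx.2 hr).trans (le_max_right _ _)
  · exact (Real.rpow_le_rpow_of_nonpos ha hx.1 hr).trans (le_max_left _ _)

theorem integrableOn_ofReal_cpow_Ioo {a b : ℝ} (ha : 0 < a) (w : ℂ) :
    IntegrableOn (fun x : ℝ => (x : ℂ) ^ w) (Ioo a b) := by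
  rcases le_total a b with hab | hba
  · have h0 : (0 : ℝ) ∉ uIcc a b := by
      rw [uIcc_of_le hab]; exact fun h => ha.not_ge h.1
    exact ((intervalIntegral.intervalIntegrable_cpow (Or.inr h0)).1).mono_set Ioo_subset_Ioc_self
  · simp [Ioo_eq_empty_of_le hba]

theorem setIntegral_Ioo_ofReal_cpow_neg_sub_one {a b : ℝ} (ha : 0 < a) (hab : a ≤ b) {s : ℂ}
    (hs : s ≠ 0) :
    ∫ x in Ioo a b, (x : ℂ) ^ (-s - 1) = 1 / s * ((a : ℂ) ^ (-s) - (b : ℂ) ^ (-s)) := by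
  have h0 : (0 : ℝ) ∉ uIcc a b := by
    rw [uIcc_of_le hab]; exact fun h => ha.not_ge h.1
  have hne : -s - 1 ≠ -1 := fun h => hs (by linear_combination -h)
  rw [← integral_Ioc_eq_integral_Ioo, ← intervalIntegral.integral_of_le hab,
    integral_cpow (Or.inr ⟨hne, h0⟩), show -s - 1 + 1 = -s by ring]
  field_simp
  ring

theorem HasSum.summable_and_eq_mul_tsum {f : ℕ → ℂ} {c I : ℂ} (hc : c ≠ 0)
    (h : HasSum (fun j => c * f j) I) : Summable f ∧ I = c * ∑' j, f j :=
  ⟨(summable_mul_left_iff hc).1 h.summable, by rw [← h.tsum_eq, tsum_mul_left]⟩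

theorem hasSum_setIntegral_cpow_iUnion_Ioo {a b : ℕ → ℝ} (ha : ∀ j, 0 < a j)
    (hab : ∀ j, a j ≤ b j) (hd : Pairwise (Disjoint on fun j => Ioo (a j) (b j))) {s : ℂ}
    (hs : s ≠ 0) (hsum : Summable fun j => ∫ x in Ioo (a j) (b j), ‖(x : ℂ) ^ (-s - 1)‖) :
    HasSum (fun j => 1 / s * ((a j : ℂ) ^ (-s) - (b j : ℂ) ^ (-s)))
      (∫ x in ⋃ j, Ioo (a j) (b j), (x : ℂ) ^ (-s - 1)) := by
  have hint : IntegrableOn (fun x : ℝ => (x : ℂ) ^ (-s - 1)) (⋃ j, Ioo (a j) (b j)) :=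
    integrableOn_iUnion_of_summable_integral_norm
      (fun j => integrableOn_ofReal_cpow_Ioo (ha j) _) hsum
  have h := hasSum_integral_iUnion (fun _ => measurableSet_Ioo) hd hint
  rwa [funext fun j => setIntegral_Ioo_ofReal_cpow_neg_sub_one (ha j) (hab j) hs] at h

def omegaInterval (α β k : ℝ) : Set ℝ := Ioo (k ^ α) (k ^ α + k ^ (-β))

section omegaInterval

variable {α β : ℝ} {j₀ : ℕ}

theorem iUnion_omegaInterval_inter_Ioi (hα : 0 ≤ α) (hj₀ : 1 ≤ j₀)
    (h₂ : ∀ j : ℕ, 1 ≤ j → j < j₀ → (j : ℝ) ^ α + (j : ℝ) ^ (-β) ≤ (j₀ : ℝ) ^ α) :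
    (⋃ j : ℕ, omegaInterval α β ((j : ℝ) + 1)) ∩ Ioi ((j₀ : ℝ) ^ α) =
      ⋃ j : ℕ, omegaInterval α β ((j₀ + j : ℕ) : ℝ) := by
  ext x
  simp only [omegaInterval, mem_inter_iff, mem_iUnion, mem_Ioo, mem_Ioi]
  constructor
  · rintro ⟨⟨m, hm⟩, hxT⟩
    have hj₀m : j₀ ≤ m + 1 := by
      by_contra! h
      have := h₂ (m + 1) (by omega) h
      push_cast at this
      linarith [hm.2]
    exact ⟨m + 1 - j₀, by rwa [Nat.add_sub_cancel' hj₀m, Nat.cast_add_one]⟩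
  · rintro ⟨j, hx⟩
    have hj : ((j₀ + j - 1 : ℕ) : ℝ) + 1 = ((j₀ + j : ℕ) : ℝ) := by
      rw [← Nat.cast_add_one, Nat.sub_add_cancel (by omega)]
    refine ⟨⟨j₀ + j - 1, by rwa [hj]⟩, lt_of_le_of_lt ?_ hx.1⟩
    exact Real.rpow_le_rpow (Nat.cast_nonneg _) (by exact_mod_cast Nat.le_add_right _ _) hα

theorem pairwise_disjoint_omegaInterval (hα : 0 ≤ α)
    (h₁ : ∀ j : ℕ, j₀ ≤ j → (j : ℝ) ^ α + (j : ℝ) ^ (-β) ≤ ((j : ℝ) + 1) ^ α) :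
    Pairwise (Disjoint on fun j : ℕ => omegaInterval α β ((j₀ + j : ℕ) : ℝ)) := by
  refine (pairwise_disjoint_on _).2 fun i l hil => Ioo_disjoint_Ioo.2 ?_
  have hgap : ((j₀ + i : ℕ) : ℝ) ^ α + ((j₀ + i : ℕ) : ℝ) ^ (-β) ≤ ((j₀ + l : ℕ) : ℝ) ^ α :=
    (h₁ _ (Nat.le_add_right _ _)).trans <|
      Real.rpow_le_rpow (by positivity) (by exact_mod_cast (by omega : j₀ + i + 1 ≤ j₀ + l)) hα
  exact (min_le_left _ _).trans (hgap.trans (le_max_right _ _))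

theorem setIntegral_norm_cpow_omegaInterval_le (hα : 0 ≤ α) {k : ℝ} (hk : 1 ≤ k)
    (hnext : k ^ α + k ^ (-β) ≤ (k + 1) ^ α) (w : ℂ) :
    ∫ x in omegaInterval α β k, ‖(x : ℂ) ^ w‖ ≤
      max 1 (2 ^ (α * w.re)) * k ^ (α * w.re - β) := by
  have hk0 : 0 < k := one_pos.trans_le hk
  have hka : 0 < k ^ α := Real.rpow_pos_of_pos hk0 α
  have hbound : ∀ x ∈ omegaInterval α β k, ‖‖(x : ℂ) ^ w‖‖ ≤
      max 1 (2 ^ (α * w.re)) * k ^ (α * w.re) := by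
    intro x hx
    have hx2k : x ≤ (2 * k) ^ α :=
      hx.2.le.trans (hnext.trans (Real.rpow_le_rpow (by positivity) (by linarith) hα))
    rw [norm_norm, Complex.norm_cpow_eq_rpow_re_of_pos (hka.trans hx.1)]
    refine (Real.rpow_le_max_of_mem_Icc w.re hka ⟨hx.1.le, hx2k⟩).trans_eq ?_
    rw [max_mul_of_nonneg _ _ (by positivity), one_mul, ← Real.rpow_mul hk0.le,
      ← Real.rpow_mul (by positivity), Real.mul_rpow zero_le_two hk0.le]
  have hvol : volume.real (omegaInterval α β k) = k ^ (-β) := by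
    rw [omegaInterval, Real.volume_real_Ioo_of_le (le_add_of_nonneg_right (by positivity)),
      add_sub_cancel_left]
  calc ∫ x in omegaInterval α β k, ‖(x : ℂ) ^ w‖
      ≤ ‖∫ x in omegaInterval α β k, ‖(x : ℂ) ^ w‖‖ := Real.le_norm_self _
    _ ≤ max 1 (2 ^ (α * w.re)) * k ^ (α * w.re) * k ^ (-β) := by
      rw [← hvol]
      exact norm_setIntegral_le_of_norm_le_const measure_Ioo_lt_top hbound
    _ = max 1 (2 ^ (α * w.re)) * k ^ (α * w.re - β) := by
      rw [mul_assoc, ← Real.rpow_add hk0, sub_eq_add_neg]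

theorem summable_setIntegral_norm_cpow_omegaInterval (hα : 0 ≤ α) (hj₀ : 1 ≤ j₀)
    (h₁ : ∀ j : ℕ, j₀ ≤ j → (j : ℝ) ^ α + (j : ℝ) ^ (-β) ≤ ((j : ℝ) + 1) ^ α)
    {w : ℂ} (hw : α * w.re - β < -1) :
    Summable fun j : ℕ => ∫ x in omegaInterval α β ((j₀ + j : ℕ) : ℝ), ‖(x : ℂ) ^ w‖ := by
  have hmajor : Summable fun j : ℕ => ((j₀ + j : ℕ) : ℝ) ^ (α * w.re - β) :=
    (Real.summable_nat_rpow.2 hw).comp_injective (add_right_injective j₀)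
  refine (hmajor.mul_left (max 1 (2 ^ (α * w.re)))).of_nonneg_of_le
    (fun j => setIntegral_nonneg measurableSet_Ioo fun _ _ => norm_nonneg _) fun j => ?_
  exact setIntegral_norm_cpow_omegaInterval_le hα (by exact_mod_cast le_add_right hj₀)
    (h₁ _ (Nat.le_add_right _ _)) w

end omegaInterval

theorem stmt_17_general (α β : ℝ) (hα : 0 < α)
    (Ω : Set ℝ)
    (hΩ : Ω = ⋃ j : ℕ,
      Set.Ioo (((j : ℝ) + 1) ^ α) (((j : ℝ) + 1) ^ α + ((j : ℝ) + 1) ^ (-β)))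
    (j₀ : ℕ) (hj₀ : 1 ≤ j₀)
    (h₁ : ∀ j : ℕ, j₀ ≤ j → (j : ℝ) ^ α + (j : ℝ) ^ (-β) ≤ ((j : ℝ) + 1) ^ α)
    (h₂ : ∀ j : ℕ, 1 ≤ j → j < j₀ → (j : ℝ) ^ α + (j : ℝ) ^ (-β) ≤ (j₀ : ℝ) ^ α)
    (s : ℂ) (hs : (1 - (α + β)) / α < s.re) (hs0 : s ≠ 0) :
    Summable (fun j : ℕ =>
      ((((j₀ + j : ℕ) : ℝ) ^ α : ℝ) : ℂ) ^ (-s) -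
        ((((j₀ + j : ℕ) : ℝ) ^ α + ((j₀ + j : ℕ) : ℝ) ^ (-β) : ℝ) : ℂ) ^ (-s)) ∧
    ∫ x in Ω ∩ Set.Ioi ((j₀ : ℝ) ^ α), (x : ℂ) ^ (-s - 1) =
      (1 / s) * ∑' j : ℕ,
        (((((j₀ + j : ℕ) : ℝ) ^ α : ℝ) : ℂ) ^ (-s) -
          ((((j₀ + j : ℕ) : ℝ) ^ α + ((j₀ + j : ℕ) : ℝ) ^ (-β) : ℝ) : ℂ) ^ (-s)) := by
  have hk : ∀ j : ℕ, 0 < ((j₀ + j : ℕ) : ℝ) := fun j => by positivity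
  have hw : α * (-s - 1).re - β < -1 := by
    have := (div_lt_iff₀ hα).1 hs
    simp only [Complex.sub_re, Complex.neg_re, Complex.one_re]
    linarith
  have hΩT : Ω ∩ Ioi ((j₀ : ℝ) ^ α) = ⋃ j : ℕ, omegaInterval α β ((j₀ + j : ℕ) : ℝ) :=
    hΩ ▸ iUnion_omegaInterval_inter_Ioi hα.le hj₀ h₂
  rw [hΩT]
  refine HasSum.summable_and_eq_mul_tsum (one_div_ne_zero hs0) ?_
  exact hasSum_setIntegral_cpow_iUnion_Ioo (fun j => Real.rpow_pos_of_pos (hk j) α)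
    (fun j => le_add_of_nonneg_right (Real.rpow_nonneg (hk j).le _))
    (pairwise_disjoint_omegaInterval hα.le h₁) hs0
    (summable_setIntegral_norm_cpow_omegaInterval hα.le hj₀ h₁ hw)

/-- Let `α > 0`, `β > 1` and `Ω(α,β) = ⋃_{j≥1} (j^α, j^α + j^{-β}) ⊆ ℝ`.
Let `j₀ ≥ 1` be such that `j^α + j^{-β} ≤ (j+1)^α` for all `j ≥ j₀` and
`j^α + j^{-β} ≤ j₀^α` for `1 ≤ j < j₀`, and set `T = j₀^α`. Then for every `s ∈ ℂ` with
`Re s > (1-(α+β))/α` and `s ≠ 0`,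
`∫_{Ω(α,β) ∩ (T,∞)} x^{-s-1} dx = (1/s)·Σ_{j≥j₀} ((j^α)^{-s} - (j^α + j^{-β})^{-s})`,
the series converging absolutely. -/
theorem stmt_17 (α β : ℝ) (hα : 0 < α) (hβ : 1 < β)
    (Ω : Set ℝ)
    (hΩ : Ω = ⋃ j : ℕ,
      Set.Ioo (((j : ℝ) + 1) ^ α) (((j : ℝ) + 1) ^ α + ((j : ℝ) + 1) ^ (-β)))
    (j₀ : ℕ) (hj₀ : 1 ≤ j₀)
    (h₁ : ∀ j : ℕ, j₀ ≤ j → (j : ℝ) ^ α + (j : ℝ) ^ (-β) ≤ ((j : ℝ) + 1) ^ α)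
    (h₂ : ∀ j : ℕ, 1 ≤ j → j < j₀ → (j : ℝ) ^ α + (j : ℝ) ^ (-β) ≤ (j₀ : ℝ) ^ α)
    (s : ℂ) (hs : (1 - (α + β)) / α < s.re) (hs0 : s ≠ 0) :
    Summable (fun j : ℕ =>
      ((((j₀ + j : ℕ) : ℝ) ^ α : ℝ) : ℂ) ^ (-s) -
        ((((j₀ + j : ℕ) : ℝ) ^ α + ((j₀ + j : ℕ) : ℝ) ^ (-β) : ℝ) : ℂ) ^ (-s)) ∧
    ∫ x in Ω ∩ Set.Ioi ((j₀ : ℝ) ^ α), (x : ℂ) ^ (-s - 1) =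
      (1 / s) * ∑' j : ℕ,
        (((((j₀ + j : ℕ) : ℝ) ^ α : ℝ) : ℂ) ^ (-s) -
          ((((j₀ + j : ℕ) : ℝ) ^ α + ((j₀ + j : ℕ) : ℝ) ^ (-β) : ℝ) : ℂ) ^ (-s)) :=
  stmt_17_general α β hα Ω hΩ j₀ hj₀ h₁ h₂ s hs hs0
end

section
/- For k ≥ 1 set S_k := Σ_{j=1}^k 2^{-j}/j, S_0 := 0, and define Ω := ⋃_{k=1}^∞ Ω_k ⊆ ℝ², where Ω_k := {(x,y) ∈ ℝ² : x > 1, S_{k-1} < y < S_{k-1} + (2^{-k}/k)·x^{-1-1/k}}. Then the Ω_k are pairwise disjoint, |Ω| = 1, and for every s ∈ ℂ with Re s > -2, ∫_Ω x^{-s-2} d(x,y) = Σ_{k=1}^∞ 2^{-k} / ( k·(s + 2 + 1/k) ), where the series converges absolutely and x^{-s-2} denotes the complex power of the positive real x. (Since 0 < y < log 2 < 1 < x on Ω, this integral is exactly the Lapidus zeta function of Ω at infinity with respect to the sup-norm on ℝ² with T = 1.) -/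
open MeasureTheory Filter
open scoped Topology ENNReal

/-- `S_k = Σ_{j=1}^k 2^{-j}/j` (here `S18 k` is the sum of the first `k` terms, `S18 0 = 0`). -/
noncomputable def S18 (k : ℕ) : ℝ :=
  ∑ j ∈ Finset.range k, ((2 : ℝ) ^ (j + 1))⁻¹ / ((j : ℝ) + 1)

/-- `Ω_k = {(x,y) : x > 1, S_{k-1} < y < S_{k-1} + (2^{-k}/k)·x^{-1-1/k}}`; here `O18 k`
corresponds to the paper's `Ω_{k+1}`, i.e. the index is shifted by one. -/
noncomputable def O18 (k : ℕ) : Set (EuclideanSpace ℝ (Fin 2)) :=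
  {p | 1 < p 0 ∧ S18 k < p 1 ∧
    p 1 < S18 k + ((2 : ℝ) ^ (k + 1))⁻¹ / ((k : ℝ) + 1) *
      (p 0) ^ (-1 - 1 / ((k : ℝ) + 1))}

/-!
Each `Ω_{k+1}` is the region between two graphs over `(1, ∞)`, so by Fubini the push-forward of
Lebesgue measure on `Ω_{k+1}` under `(x, y) ↦ x` is `2^{-(k+1)}/(k+1) · x^{-1-1/(k+1)} dx` on
`(1, ∞)`. Integrating `1` and `x^{-s-2}` against these densities gives `|Ω_{k+1}| = 2^{-(k+1)}`
and the `k`-th term of the series. The pieces lie in the disjoint strips `S_k < y < S_{k+1}`, and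
`|x^{-s-2}| ≤ 1` on `Ω`, which has finite measure, so the integral over `Ω` is the sum of the
integrals over the pieces.
-/

open Set Function

theorem map_fst_restrict_regionBetween {α : Type*} [MeasurableSpace α] (μ : Measure α)
    {f g : α → ℝ} {s : Set α} (hf : Measurable f) (hg : Measurable g) (hs : MeasurableSet s) :
    ((μ.prod volume).restrict (regionBetween f g s)).map Prod.fst =
      (μ.restrict s).withDensity (fun x => ENNReal.ofReal (g x - f x)) := by
  ext t ht
  have hslice : Prod.fst ⁻¹' t ∩ regionBetween f g s = regionBetween f g (t ∩ s) := by
    ext p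
    simp only [regionBetween, mem_inter_iff, mem_preimage, mem_ofPred_eq, and_assoc]
  rw [Measure.map_apply measurable_fst ht, Measure.restrict_apply (measurable_fst ht), hslice,
    volume_regionBetween_eq_lintegral' hf hg (ht.inter hs), withDensity_apply _ ht,
    Measure.restrict_restrict ht]
  rfl

noncomputable def planeEquiv : EuclideanSpace ℝ (Fin 2) ≃ᵐ ℝ × ℝ :=
  (MeasurableEquiv.toLp 2 (Fin 2 → ℝ)).symm.trans MeasurableEquiv.finTwoArrow

theorem measurePreserving_planeEquiv : MeasurePreserving planeEquiv volume volume :=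
  (EuclideanSpace.volume_preserving_symm_measurableEquiv_toLp (Fin 2)).trans
    (volume_preserving_finTwoArrow ℝ)

theorem map_restrict_planeEquiv_preimage_regionBetween {f g : ℝ → ℝ} {s : Set ℝ}
    (hf : Measurable f) (hg : Measurable g) (hs : MeasurableSet s) :
    (volume.restrict (planeEquiv ⁻¹' regionBetween f g s)).map (fun p => p 0) =
      (volume.restrict s).withDensity (fun x => ENNReal.ofReal (g x - f x)) := by
  have hR := measurableSet_regionBetween hf hg hs
  rw [show (fun p : EuclideanSpace ℝ (Fin 2) => p 0) = Prod.fst ∘ planeEquiv from rfl,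
    ← Measure.map_map measurable_fst planeEquiv.measurable,
    (measurePreserving_planeEquiv.restrict_preimage hR).map_eq]
  exact map_fst_restrict_regionBetween volume hf hg hs

noncomputable def width18 (k : ℕ) (x : ℝ) : ℝ :=
  ((2 : ℝ) ^ (k + 1))⁻¹ / ((k : ℝ) + 1) * x ^ (-1 - 1 / ((k : ℝ) + 1))

theorem width18_pos (k : ℕ) {x : ℝ} (hx : 0 < x) : 0 < width18 k x := by
  unfold width18; positivity

theorem width18_exponent_lt (k : ℕ) : -1 - 1 / ((k : ℝ) + 1) < -1 := by
  have : 0 < 1 / ((k : ℝ) + 1) := by positivity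
  linarith

theorem O18_eq_preimage_regionBetween (k : ℕ) :
    O18 k =
      planeEquiv ⁻¹' regionBetween (fun _ => S18 k) (fun x => S18 k + width18 k x) (Ioi 1) :=
  rfl

@[fun_prop]
theorem measurable_width18 (k : ℕ) : Measurable (width18 k) := by
  unfold width18; fun_prop

theorem measurableSet_O18 (k : ℕ) : MeasurableSet (O18 k) := by
  rw [O18_eq_preimage_regionBetween]
  exact planeEquiv.measurable
    (measurableSet_regionBetween (by fun_prop) (by fun_prop) measurableSet_Ioi)

theorem map_restrict_O18 (k : ℕ) :
    (volume.restrict (O18 k)).map (fun p => p 0) =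
      (volume.restrict (Ioi 1)).withDensity (fun x => ENNReal.ofReal (width18 k x)) := by
  rw [O18_eq_preimage_regionBetween,
    map_restrict_planeEquiv_preimage_regionBetween (by fun_prop) (by fun_prop) measurableSet_Ioi]
  simp only [add_sub_cancel_left]

theorem integral_width18 (k : ℕ) : ∫ x in Ioi 1, width18 k x = ((2 : ℝ) ^ (k + 1))⁻¹ := by
  unfold width18
  rw [integral_const_mul, integral_Ioi_rpow_of_lt (width18_exponent_lt k) one_pos,
    Real.one_rpow]
  field_simp
  ring

theorem volume_O18 (k : ℕ) : volume (O18 k) = 2⁻¹ ^ (k + 1) := by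
  have hint : IntegrableOn (width18 k) (Ioi 1) :=
    (integrableOn_Ioi_rpow_of_lt (width18_exponent_lt k) one_pos).const_mul _
  have hnonneg : 0 ≤ᵐ[volume.restrict (Ioi 1)] width18 k :=
    ae_restrict_of_forall_mem measurableSet_Ioi fun x hx =>
      (width18_pos k (zero_lt_one.trans hx)).le
  rw [← Measure.restrict_apply_univ,
    ← preimage_univ (f := fun p : EuclideanSpace ℝ (Fin 2) => p 0),
    ← Measure.map_apply (by fun_prop) MeasurableSet.univ, map_restrict_O18,
    withDensity_apply _ MeasurableSet.univ, Measure.restrict_univ,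
    ← ofReal_integral_eq_lintegral_ofReal hint hnonneg, integral_width18,
    ← inv_pow, ENNReal.ofReal_pow (by norm_num), ENNReal.ofReal_inv_of_pos two_pos]
  norm_num

theorem integral_O18_comp {E : Type*} [NormedAddCommGroup E] [NormedSpace ℝ E] (k : ℕ)
    {F : ℝ → E} (hF : StronglyMeasurable F) :
    ∫ p in O18 k, F (p 0) = ∫ x in Ioi 1, width18 k x • F x := by
  rw [← integral_map (by fun_prop) hF.aestronglyMeasurable, map_restrict_O18,
    integral_withDensity_eq_integral_toReal_smul (by fun_prop)
      (ae_of_all _ fun _ => ENNReal.ofReal_lt_top)]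
  refine setIntegral_congr_fun measurableSet_Ioi fun x hx => ?_
  rw [ENNReal.toReal_ofReal (width18_pos k (zero_lt_one.trans hx)).le]

theorem integral_width18_smul_cpow (k : ℕ) {s : ℂ} (hs : -2 - ((k : ℝ) + 1)⁻¹ < s.re) :
    ∫ x in Ioi 1, width18 k x • (x : ℂ) ^ (-s - 2) =
      ((2 : ℂ) ^ (k + 1))⁻¹ / (((k : ℂ) + 1) * (s + 2 + ((k : ℂ) + 1)⁻¹)) := by
  set a : ℂ := ((-1 - 1 / ((k : ℝ) + 1) : ℝ) : ℂ) + (-s - 2)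
  have ha : a.re < -1 := by
    simp only [a, Complex.add_re, Complex.ofReal_re, Complex.sub_re, Complex.neg_re,
      Complex.re_ofNat, one_div]
    linarith
  have hpow : EqOn (fun x : ℝ => width18 k x • (x : ℂ) ^ (-s - 2))
      (fun x => (((2 : ℝ) ^ (k + 1))⁻¹ / ((k : ℝ) + 1) : ℝ) * (x : ℂ) ^ a) (Ioi 1) := by
    intro x hx
    have hx0 : (0 : ℝ) < x := zero_lt_one.trans hx
    simp only [width18, a, Complex.real_smul, Complex.ofReal_mul,
      Complex.ofReal_cpow hx0.le, mul_assoc,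
      Complex.cpow_add _ _ (Complex.ofReal_ne_zero.2 hx0.ne')]
  rw [setIntegral_congr_fun measurableSet_Ioi hpow, integral_const_mul,
    integral_Ioi_cpow_of_lt ha one_pos, Complex.ofReal_one, Complex.one_cpow]
  have ha1 : a + 1 = -(s + 2 + ((k : ℂ) + 1)⁻¹) := by simp only [a]; push_cast; ring
  push_cast
  rw [ha1, neg_div_neg_eq, div_mul_div_comm, mul_one]

theorem S18_succ (k : ℕ) : S18 (k + 1) = S18 k + ((2 : ℝ) ^ (k + 1))⁻¹ / ((k : ℝ) + 1) :=
  Finset.sum_range_succ _ _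

theorem monotone_S18 : Monotone S18 :=
  monotone_nat_of_le_succ fun k => by rw [S18_succ]; exact le_add_of_nonneg_right (by positivity)

theorem O18_subset_preimage_Ioo (k : ℕ) :
    O18 k ⊆ (fun p => p 1) ⁻¹' Ioo (S18 k) (S18 (k + 1)) := by
  rintro p ⟨hx, hlow, hup⟩
  refine ⟨hlow, hup.trans_le ?_⟩
  rw [S18_succ]
  gcongr
  exact mul_le_of_le_one_right (by positivity)
    (Real.rpow_le_one_of_one_le_of_nonpos hx.le ((width18_exponent_lt k).le.trans (by norm_num)))

theorem pairwise_disjoint_O18 : Pairwise (Disjoint on O18) :=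
  monotone_S18.pairwise_disjoint_on_Ioo_succ.mono fun k l h =>
    (h.preimage _).mono (O18_subset_preimage_Ioo k) (O18_subset_preimage_Ioo l)

theorem volume_iUnion_O18 : volume (⋃ k, O18 k) = 1 := by
  rw [measure_iUnion pairwise_disjoint_O18 measurableSet_O18, tsum_congr volume_O18,
    ENNReal.tsum_geometric_add_one, ENNReal.one_sub_inv_two, inv_inv]
  exact ENNReal.inv_mul_cancel two_ne_zero ENNReal.ofNat_ne_top

theorem norm_ofReal_cpow_le_one {x : ℝ} (hx : 1 ≤ x) {z : ℂ} (hz : z.re ≤ 0) :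
    ‖(x : ℂ) ^ z‖ ≤ 1 := by
  rw [Complex.norm_cpow_eq_rpow_re_of_pos (zero_lt_one.trans_le hx)]
  exact Real.rpow_le_one_of_one_le_of_nonpos hx hz

theorem integral_O18_cpow (k : ℕ) {s : ℂ} (hs : -2 < s.re) :
    ∫ p in O18 k, ((p 0 : ℝ) : ℂ) ^ (-s - 2) =
      ((2 : ℂ) ^ (k + 1))⁻¹ / (((k : ℂ) + 1) * (s + 2 + ((k : ℂ) + 1)⁻¹)) := by
  rw [integral_O18_comp k (F := fun x : ℝ => (x : ℂ) ^ (-s - 2))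
    (Complex.measurable_ofReal.pow_const _).stronglyMeasurable, integral_width18_smul_cpow k]
  have : 0 < ((k : ℝ) + 1)⁻¹ := by positivity
  linarith

/-- The sets `Ω_k` are pairwise disjoint, `|Ω| = 1` for `Ω = ⋃_k Ω_k`, and
for every `s ∈ ℂ` with `Re s > -2`,
`∫_Ω x^{-s-2} d(x,y) = Σ_{k≥1} 2^{-k}/(k(s+2+1/k))`, the series converging absolutely.
(This integral is the Lapidus zeta function of `Ω` at infinity for the sup-norm, `T = 1`.) -/
theorem stmt_18 :
    (∀ k l : ℕ, k ≠ l → Disjoint (O18 k) (O18 l)) ∧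
    volume (⋃ k : ℕ, O18 k) = 1 ∧
    ∀ s : ℂ, -2 < s.re →
      Summable (fun k : ℕ =>
        ((2 : ℂ) ^ (k + 1))⁻¹ / (((k : ℂ) + 1) * (s + 2 + ((k : ℂ) + 1)⁻¹))) ∧
      ∫ p in ⋃ k : ℕ, O18 k, ((p 0 : ℝ) : ℂ) ^ (-s - 2) =
        ∑' k : ℕ,
          ((2 : ℂ) ^ (k + 1))⁻¹ / (((k : ℂ) + 1) * (s + 2 + ((k : ℂ) + 1)⁻¹)) := by
  refine ⟨fun k l => @pairwise_disjoint_O18 k l, volume_iUnion_O18, fun s hs => ?_⟩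
  have hint : IntegrableOn (fun p : EuclideanSpace ℝ (Fin 2) => ((p 0 : ℝ) : ℂ) ^ (-s - 2))
      (⋃ k, O18 k) := by
    refine Measure.integrableOn_of_bounded (M := 1) (by simp [volume_iUnion_O18])
      ((Complex.measurable_ofReal.pow_const _).comp (by fun_prop)).aestronglyMeasurable
      (ae_restrict_of_forall_mem (.iUnion measurableSet_O18) fun p hp => ?_)
    obtain ⟨k, hk⟩ := mem_iUnion.1 hp
    refine norm_ofReal_cpow_le_one hk.1.le ?_
    simp only [Complex.sub_re, Complex.neg_re, Complex.re_ofNat]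
    linarith
  have hsum := hasSum_integral_iUnion measurableSet_O18 pairwise_disjoint_O18 hint
  simp_rw [integral_O18_cpow _ hs] at hsum
  exact ⟨hsum.summable, hsum.tsum_eq.symm⟩
end
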